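/- arXiv:1607.04755 — 8 statements merged into one kernel-verified Lean document; each statement's English description precedes it below -/
import Mathlib

section
/- Let m ≥ 1, let a_1, …, a_m be real numbers with |a_1| = max_{1≤i≤m} |a_i|, and let q_1, …, q_m be independent random variables, each uniformly distributed on {-1, +1}. Then the probability that |∑_{i=1}^m q_i · a_i| ≥ |a_1| is at least 1/2. -/
open MeasureTheory ProbabilityTheory

theorem anti_concentration {Ω : Type*} [MeasurableSpace Ω] (μ : Measure Ω)
    [IsProbabilityMeasure μ] (m : ℕ) (hm : 1 ≤ m) (a : Fin m → ℝ)
    (hmax : ∀ i, |a i| ≤ |a ⟨0, hm⟩|)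
    (q : Fin m → Ω → ℝ) (hmeas : ∀ i, Measurable (q i))
    (hindep : iIndepFun q μ)
    (hunif : ∀ i, Measure.map (q i) μ =
      (1 / 2 : ENNReal) • Measure.dirac (-1 : ℝ) + (1 / 2 : ENNReal) • Measure.dirac (1 : ℝ)) :
    (1 / 2 : ENNReal) ≤ μ {ω | |a ⟨0, hm⟩| ≤ |∑ i, q i ω * a i|} := by
  classical
  set i0 : Fin m := ⟨0, hm⟩ with hi0
  set c : ℝ := |a i0| with hc
  -- the family f i = q i * a i
  set f : Fin m → Ω → ℝ := fun i ω => q i ω * a i with hf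
  have hf_meas : ∀ i, Measurable (f i) := fun i => (hmeas i).mul_const _
  have hf_indep : iIndepFun f μ :=
    hindep.comp (fun i x => x * a i) (fun i => measurable_mul_const _)
  set s : Finset (Fin m) := Finset.univ.erase i0 with hs
  set T : Ω → ℝ := fun ω => ∑ j ∈ s, f j ω with hT
  have hT_meas : Measurable T := Finset.measurable_sum _ fun j _ => hf_meas j
  have hTX : IndepFun T (f i0) μ := by
    have := hf_indep.indepFun_finsetSum_of_notMem hf_meas (Finset.notMem_erase i0 Finset.univ)
    have heq : (∑ j ∈ s, f j) = T := by
      funext ω; simp [hT, Finset.sum_apply]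
    rwa [heq] at this
  -- rewrite the event
  have hev : {ω | c ≤ |∑ i, q i ω * a i|} = (fun ω => (T ω, f i0 ω)) ⁻¹' {p : ℝ × ℝ | c ≤ |p.1 + p.2|} := by
    ext ω
    have : ∑ i, q i ω * a i = T ω + f i0 ω := by
      rw [hT, hs]
      rw [add_comm, Finset.add_sum_erase _ (fun j => f j ω) (Finset.mem_univ i0)]
    simp [Set.mem_preimage, this]
  have hset : MeasurableSet {p : ℝ × ℝ | c ≤ |p.1 + p.2|} := by
    have : Measurable fun p : ℝ × ℝ => |p.1 + p.2| := (measurable_fst.add measurable_snd).abs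
    exact measurableSet_le measurable_const this
  -- law of f i0
  have hlawX : Measure.map (f i0) μ =
      (1 / 2 : ENNReal) • Measure.dirac (-(a i0)) + (1 / 2 : ENNReal) • Measure.dirac (a i0) := by
    have : f i0 = (fun x => x * a i0) ∘ q i0 := rfl
    rw [this, ← Measure.map_map (measurable_mul_const _) (hmeas i0), hunif i0,
      Measure.map_add _ _ (measurable_mul_const _), Measure.map_smul, Measure.map_smul,
      Measure.map_dirac' (measurable_mul_const _), Measure.map_dirac' (measurable_mul_const _)]
    norm_num
  set νT : Measure ℝ := Measure.map T μ with hνT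
  have : IsProbabilityMeasure νT := Measure.isProbabilityMeasure_map hT_meas.aemeasurable
  -- use independence
  have hprod : Measure.map (fun ω => (T ω, f i0 ω)) μ = νT.prod (Measure.map (f i0) μ) :=
    (indepFun_iff_map_prod_eq_prod_map_map hT_meas.aemeasurable
      (hf_meas i0).aemeasurable).mp hTX
  rw [hev, ← Measure.map_apply (hT_meas.prodMk (hf_meas i0)) hset, hprod, hlawX,
    Measure.prod_apply hset]
  -- pointwise bound on the inner measure
  have hpt : ∀ t : ℝ, (1 / 2 : ENNReal) ≤
      ((1 / 2 : ENNReal) • Measure.dirac (-(a i0)) + (1 / 2 : ENNReal) • Measure.dirac (a i0))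
        (Prod.mk t ⁻¹' {p : ℝ × ℝ | c ≤ |p.1 + p.2|}) := by
    intro t
    have hmax2 : c ≤ |t + a i0| ∨ c ≤ |t + -(a i0)| := by
      by_contra h
      push_neg at h
      obtain ⟨h1, h2⟩ := h
      have : 2 * c < 2 * c := by
        calc 2 * c = |a i0| + |a i0| := by rw [hc]; ring
        _ = |(t + a i0) - (t + -(a i0))| / 2 * 2 := by
            rw [show (t + a i0) - (t + -(a i0)) = 2 * a i0 by ring, abs_mul]
            simp [abs_of_nonneg (by norm_num : (0:ℝ) ≤ 2)]
            ring
        _ ≤ (|t + a i0| + |t + -(a i0)|) / 2 * 2 := by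
            gcongr
            exact abs_sub _ _
        _ < (c + c) / 2 * 2 := by gcongr <;> linarith
        _ = 2 * c := by ring
      exact lt_irrefl _ this
    have hpre : Prod.mk t ⁻¹' {p : ℝ × ℝ | c ≤ |p.1 + p.2|} = {x : ℝ | c ≤ |t + x|} := rfl
    rw [hpre]
    rcases hmax2 with h | h
    · calc (1 / 2 : ENNReal) = (1 / 2 : ENNReal) * Measure.dirac (a i0) {x : ℝ | c ≤ |t + x|} := by
            rw [Measure.dirac_apply_of_mem (show _ ∈ {x : ℝ | c ≤ |t + x|} from h)]; ring
        _ ≤ _ := by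
            simp only [Measure.add_apply, Measure.smul_apply, smul_eq_mul]
            exact le_add_self
    · calc (1 / 2 : ENNReal) = (1 / 2 : ENNReal) * Measure.dirac (-(a i0)) {x : ℝ | c ≤ |t + x|} := by
            rw [Measure.dirac_apply_of_mem (show _ ∈ {x : ℝ | c ≤ |t + x|} from h)]; ring
        _ ≤ _ := by
            simp only [Measure.add_apply, Measure.smul_apply, smul_eq_mul]
            exact le_self_add
  calc (1 / 2 : ENNReal) = ∫⁻ _, (1 / 2 : ENNReal) ∂νT := by simp
    _ ≤ _ := lintegral_mono fun t => hpt t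
end

section
/- Let q ≥ 1 be a natural number and let δ ∈ (0, 1/2]. Then T_q(1 + δ) ≥ (1/2)·e^{q·√δ}, where T_q is the degree-q Chebyshev polynomial of the first kind. -/
lemma T_real_cosh_aux (x : ℝ) (n : ℤ) :
    (Polynomial.Chebyshev.T ℝ n).eval (Real.cosh x) = Real.cosh (n * x) := by
  have h := Polynomial.Chebyshev.T_complex_cos (x * Complex.I) n
  rw [Complex.cos_mul_I] at h
  have h2 : (n : ℂ) * (x * Complex.I) = ((n * x : ℝ) : ℂ) * Complex.I := by push_cast; ring
  rw [h2, Complex.cos_mul_I] at h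
  have h3 : Complex.ofReal ((Polynomial.Chebyshev.T ℝ n).eval (Real.cosh x))
      = Complex.ofReal (Real.cosh (n * x)) := by
    calc Complex.ofReal ((Polynomial.Chebyshev.T ℝ n).eval (Real.cosh x))
        = (Polynomial.Chebyshev.T ℂ n).eval (Complex.ofReal (Real.cosh x)) :=
          Polynomial.Chebyshev.complex_ofReal_eval_T _ n
      _ = (Polynomial.Chebyshev.T ℂ n).eval (Complex.cosh x) := by rw [Complex.ofReal_cosh]
      _ = Complex.ofReal (Real.cosh (n * x)) := by rw [h, Complex.ofReal_cosh]
  exact_mod_cast h3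

lemma key_ineq (δ : ℝ) (hδ0 : 0 < δ) (hδ : δ ≤ 1 / 2) :
    Real.exp (Real.sqrt δ) ≤ 1 + δ + Real.sqrt (2 * δ + δ ^ 2) := by
  set t := Real.sqrt δ with ht
  have ht0 : 0 < t := Real.sqrt_pos.mpr hδ0
  have ht2 : t ^ 2 = δ := Real.sq_sqrt hδ0.le
  have ht1 : t ≤ 1 := by nlinarith
  -- s = t * sqrt (2 + t^2)
  set u := Real.sqrt (2 + t ^ 2) with hu
  have hu0 : 0 ≤ u := Real.sqrt_nonneg _
  have hu2 : u ^ 2 = 2 + t ^ 2 := Real.sq_sqrt (by positivity)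
  have hs : Real.sqrt (2 * δ + δ ^ 2) = t * u := by
    rw [← Real.sqrt_mul_self ht0.le, hu]
    rw [← Real.sqrt_mul (by positivity)]
    congr 1
    nlinarith
  rw [hs, ← ht2]
  have hexp := Real.exp_bound' ht0.le ht1 (n := 3) (by norm_num)
  have hsum : (∑ m ∈ Finset.range 3, t ^ m / m.factorial) = 1 + t + t ^ 2 / 2 := by
    norm_num [Finset.sum_range_succ, Nat.factorial]
  rw [hsum] at hexp
  norm_num [Nat.factorial] at hexp
  -- suffices: 1 + t + t^2/2 + 2t^3/9 ≤ 1 + t^2 + t*u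
  have hugt : 1 - t / 2 + 2 * t ^ 2 / 9 ≤ u := by nlinarith
  nlinarith [mul_le_mul_of_nonneg_left hugt ht0.le]

theorem chebyshev_lower_bound (q : ℕ) (hq : 1 ≤ q) (δ : ℝ) (hδ0 : 0 < δ) (hδ : δ ≤ 1 / 2) :
    (Polynomial.Chebyshev.T ℝ q).eval (1 + δ) ≥ (1 / 2) * Real.exp (q * Real.sqrt δ) := by
  set s := Real.sqrt (2 * δ + δ ^ 2) with hs
  have hs0 : 0 ≤ s := Real.sqrt_nonneg _
  have hs2 : s ^ 2 = 2 * δ + δ ^ 2 := Real.sq_sqrt (by positivity)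
  set a := 1 + δ + s with ha
  have ha1 : 1 < a := by nlinarith [Real.sqrt_pos.mpr (show (0:ℝ) < 2 * δ + δ ^ 2 by positivity)]
  have ha0 : 0 < a := by linarith
  set x := Real.log a with hx
  have hax : Real.exp x = a := Real.exp_log ha0
  have hainv : a⁻¹ = 1 + δ - s := by
    have hm : a * (1 + δ - s) = 1 := by nlinarith
    exact inv_eq_of_mul_eq_one_right hm
  have hcosh : Real.cosh x = 1 + δ := by
    rw [Real.cosh_eq, hax, Real.exp_neg, hax, hainv]
    ring
  have hT : (Polynomial.Chebyshev.T ℝ q).eval (1 + δ) = Real.cosh (q * x) := by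
    rw [← hcosh]
    exact_mod_cast T_real_cosh_aux x q
  rw [hT, Real.cosh_eq, ge_iff_le]
  have h1 : Real.exp (q * Real.sqrt δ) ≤ Real.exp (q * x) := by
    apply Real.exp_le_exp.mpr
    apply mul_le_mul_of_nonneg_left _ (Nat.cast_nonneg q)
    calc Real.sqrt δ ≤ Real.log (Real.exp (Real.sqrt δ)) := by rw [Real.log_exp]
      _ ≤ Real.log a := Real.log_le_log (Real.exp_pos _) (key_ineq δ hδ0 hδ)
  have h2 : 0 < Real.exp (-(q * x)) := Real.exp_pos _
  linarith
end

section
/- Let d ≥ 1 and let x_1, …, x_k be vectors in ℝ^d such that ⟨x_i, x_j⟩ < 0 for all i ≠ j, where ⟨·,·⟩ is the standard inner product. Then k ≤ d + 1. Equivalently, there do not exist d + 2 vectors in ℝ^d with pairwise strictly negative inner products. -/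
open scoped RealInnerProductSpace
open Module Submodule

set_option maxHeartbeats 1000000 in

private lemma aux_key : ∀ (d : ℕ) (E : Type) [NormedAddCommGroup E]
    [InnerProductSpace ℝ E] [FiniteDimensional ℝ E], finrank ℝ E ≤ d →
    ∀ (k : ℕ) (x : Fin k → E), (∀ i j : Fin k, i ≠ j → ⟪x i, x j⟫ < 0) → k ≤ d + 1 := by
  intro d
  induction d with
  | zero =>
    intro E _ _ _ hE k x h
    by_contra hk
    push_neg at hk
    have hsub : Subsingleton E := by
      rw [← finrank_zero_iff (R := ℝ)]; omega
    have h2 : (2 : ℕ) ≤ k := by omega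
    have hij : (⟨0, by omega⟩ : Fin k) ≠ ⟨1, by omega⟩ := by
      simp [Fin.ext_iff]
    have := h _ _ hij
    have h0 : x ⟨0, by omega⟩ = x ⟨1, by omega⟩ := Subsingleton.elim _ _
    rw [h0, real_inner_self_eq_norm_sq] at this
    nlinarith [sq_nonneg ‖x (⟨1, by omega⟩ : Fin k)‖]
  | succ d ih =>
    intro E _ _ _ hE k x h
    match k with
    | 0 => omega
    | (m + 1) =>
      set v : E := x (Fin.last m) with hv
      by_cases hm : m = 0
      · omega
      have hlast : ∀ i : Fin m, (i.castSucc : Fin (m+1)) ≠ Fin.last m := fun i =>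
        Fin.ne_of_lt i.castSucc_lt_last
      have hvne : v ≠ 0 := by
        intro h0
        have hne : ((⟨0, by omega⟩ : Fin m).castSucc : Fin (m+1)) ≠ Fin.last m :=
          hlast _
        have := h _ _ hne
        rw [hv] at h0
        rw [h0] at this
        simp at this
      set K : Submodule ℝ E := (ℝ ∙ v)ᗮ with hK
      have hfr : finrank ℝ (ℝ ∙ v) = 1 := finrank_span_singleton hvne
      have hsum : finrank ℝ (ℝ ∙ v) + finrank ℝ K = finrank ℝ E :=
        Submodule.finrank_add_finrank_orthogonal _
      have hKd : finrank ℝ K ≤ d := by omega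
      clear_value v
      clear_value K
      -- projections
      set P := orthogonalProjection K with hP
      set y : Fin m → K := fun i => P (x i.castSucc) with hy
      clear_value y
      clear_value P
      -- key inner product formula
      have key : ∀ u w : E, ⟪v, u⟫ < 0 → ⟪v, w⟫ < 0 → ⟪u, w⟫ < 0 →
          ⟪(P u : E), (P w : E)⟫ < 0 := by
        intro u w hu hw huw
        have hPu : (P u : E) ∈ K := (P u).2
        have hsu : u - (P u : E) ∈ Kᗮ := by
          rw [hP]; exact K.sub_starProjection_mem_orthogonal u
        have hsw : w - (P w : E) ∈ Kᗮ := by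
          rw [hP]; exact K.sub_starProjection_mem_orthogonal w
        have hKK : Kᗮ = ℝ ∙ v := by rw [hK]; exact Submodule.orthogonal_orthogonal _
        rw [hKK] at hsu hsw
        obtain ⟨a, ha⟩ := Submodule.mem_span_singleton.mp hsu
        obtain ⟨b, hb⟩ := Submodule.mem_span_singleton.mp hsw
        have hvu : ⟪v, u⟫ = a * ⟪v, v⟫ := by
          have h1 : ⟪v, (P u : E)⟫ = 0 := by
            have hm2 : (P u : E) ∈ (ℝ ∙ v)ᗮ := hK ▸ (P u).2
            exact (Submodule.mem_orthogonal _ _).mp hm2 v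
              (Submodule.mem_span_singleton_self v)
          have : ⟪v, u⟫ = ⟪v, (P u : E)⟫ + ⟪v, u - (P u : E)⟫ := by
            rw [← inner_add_right]; congr 1; abel
          rw [this, h1, ← ha, real_inner_smul_right]
          ring
        have hvw : ⟪v, w⟫ = b * ⟪v, v⟫ := by
          have h1 : ⟪v, (P w : E)⟫ = 0 := by
            have hm2 : (P w : E) ∈ (ℝ ∙ v)ᗮ := hK ▸ (P w).2
            exact (Submodule.mem_orthogonal _ _).mp hm2 v
              (Submodule.mem_span_singleton_self v)
          have : ⟪v, w⟫ = ⟪v, (P w : E)⟫ + ⟪v, w - (P w : E)⟫ := by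
            rw [← inner_add_right]; congr 1; abel
          rw [this, h1, ← hb, real_inner_smul_right]
          ring
        have hvv : (0:ℝ) < ⟪v, v⟫ := by
          rw [real_inner_self_eq_norm_sq]
          exact pow_pos (norm_pos_iff.mpr hvne) 2
        have ha0 : a < 0 := by
          by_contra hc
          push_neg at hc
          have h2 : (0:ℝ) ≤ a * ⟪v, v⟫ := mul_nonneg hc hvv.le
          rw [← hvu] at h2
          linarith
        have hb0 : b < 0 := by
          by_contra hc
          push_neg at hc
          have h2 : (0:ℝ) ≤ b * ⟪v, v⟫ := mul_nonneg hc hvv.le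
          rw [← hvw] at h2
          linarith
        have hcross1 : ⟪u - (P u : E), (P w : E)⟫ = 0 := by
          rw [← ha, real_inner_smul_left]
          have h1 : ⟪v, (P w : E)⟫ = 0 := by
            have hm2 : (P w : E) ∈ (ℝ ∙ v)ᗮ := hK ▸ (P w).2
            exact (Submodule.mem_orthogonal _ _).mp hm2 v
              (Submodule.mem_span_singleton_self v)
          rw [h1]; ring
        have hcross2 : ⟪(P u : E), w - (P w : E)⟫ = 0 := by
          rw [← hb, real_inner_smul_right]
          have h1 : ⟪(P u : E), v⟫ = 0 := by
            have hm2 : (P u : E) ∈ (ℝ ∙ v)ᗮ := hK ▸ (P u).2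
            rw [real_inner_comm]
            exact (Submodule.mem_orthogonal _ _).mp hm2 v
              (Submodule.mem_span_singleton_self v)
          rw [h1]; ring
        have hsub : ⟪u - (P u : E), w - (P w : E)⟫ = a * b * ⟪v, v⟫ := by
          rw [← ha, ← hb, real_inner_smul_left, real_inner_smul_right]; ring
        have hdecomp : ⟪u, w⟫ = ⟪(P u : E), (P w : E)⟫ + a * b * ⟪v, v⟫ := by
          have e0 : ⟪u, w⟫ = ⟪(P u : E) + (u - (P u : E)), (P w : E) + (w - (P w : E))⟫ := by
            congr 1 <;> abel
          rw [e0, inner_add_left, inner_add_right, inner_add_right, hcross1, hcross2, hsub]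
          ring
        have hab : (0:ℝ) < a * b * ⟪v, v⟫ := mul_pos (mul_pos_of_neg_of_neg ha0 hb0) hvv
        linarith
      have hneg : ∀ i j : Fin m, i ≠ j → ⟪y i, y j⟫ < 0 := by
        intro i j hij
        have h1 : ⟪v, x i.castSucc⟫ < 0 := by
          rw [hv]; exact h _ _ (Ne.symm (hlast i))
        have h2 : ⟪v, x j.castSucc⟫ < 0 := by
          rw [hv]; exact h _ _ (Ne.symm (hlast j))
        have h3 : ⟪x i.castSucc, x j.castSucc⟫ < 0 :=
          h _ _ (fun hc => hij (Fin.castSucc_injective m hc))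
        have hthis := key _ _ h1 h2 h3
        rw [Submodule.coe_inner, hy]
        exact hthis
      have := ih K hKd m y hneg
      omega

theorem neg_inner_packing_bound (d k : ℕ) (hd : 1 ≤ d)
    (x : Fin k → EuclideanSpace ℝ (Fin d))
    (h : ∀ i j : Fin k, i ≠ j → ⟪x i, x j⟫ < 0) :
    k ≤ d + 1 := by
  exact aux_key d (EuclideanSpace ℝ (Fin d)) (by simp) k x h
end

section
/- Let r ∈ (0, 0.2], ε ∈ (0, 1/2], and let x, y be unit vectors in ℝ^d with ‖x − y‖ ≥ (1 + ε)·r. Then the angle between x and y satisfies arccos(⟨x, y⟩) ≥ (1 + ε/2)·arccos(1 − r²/2). -/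
open scoped RealInnerProductSpace

set_option maxHeartbeats 1000000 in
open Real in
theorem angle_amplification (d : ℕ) (r ε : ℝ)
    (hr0 : 0 < r) (hr : r ≤ 0.2) (hε0 : 0 < ε) (hε : ε ≤ 1 / 2)
    (x y : EuclideanSpace ℝ (Fin d)) (hx : ‖x‖ = 1) (hy : ‖y‖ = 1)
    (h : ‖x - y‖ ≥ (1 + ε) * r) :
    Real.arccos ⟪x, y⟫ ≥ (1 + ε / 2) * Real.arccos (1 - r ^ 2 / 2) := by
  have hpi4 : π ≤ 4 := by linarith [Real.pi_le_four]
  have hpi3 : 3 ≤ π := by linarith [Real.pi_gt_three]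
  have anti : ∀ a b : ℝ, a ≤ b → Real.arccos b ≤ Real.arccos a := by
    intro a b hab
    rw [Real.arccos_eq_pi_div_two_sub_arcsin, Real.arccos_eq_pi_div_two_sub_arcsin]
    exact sub_le_sub_left (Real.monotone_arcsin hab) _
  set θ := Real.arccos (1 - r ^ 2 / 2) with hθdef
  have hr2 : r ^ 2 ≤ 0.04 := by nlinarith
  have hcosθ : Real.cos θ = 1 - r ^ 2 / 2 :=
    Real.cos_arccos (by nlinarith) (by nlinarith)
  have hθ0 : 0 ≤ θ := Real.arccos_nonneg _
  have hθle : θ ≤ π / 3 := by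
    have h13 : Real.arccos (1 / 2) = π / 3 :=
      Real.arccos_eq_of_eq_cos (by positivity) (by linarith) Real.cos_pi_div_three.symm
    calc θ ≤ Real.arccos (1 / 2) := anti _ _ (by nlinarith)
      _ = π / 3 := h13
  set α := θ / 2 with hαdef
  have hα0 : 0 ≤ α := by positivity
  have hαle : α ≤ π / 6 := by simp only [hαdef]; linarith
  -- sin α ≥ α / 2
  have hsinα_lb : α / 2 ≤ Real.sin α := by
    have := Real.mul_le_sin hα0 (by linarith)
    have h2pi : (1:ℝ) / 2 ≤ 2 / π := by
      rw [div_le_div_iff₀ (by norm_num) (by linarith)]; linarith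
    nlinarith
  have hsinα0 : 0 ≤ Real.sin α := Real.sin_nonneg_of_nonneg_of_le_pi hα0 (by linarith)
  -- key: sin ((1+ε/2)θ/2) ≤ (1+ε) sin α
  have hβ0 : 0 ≤ ε * α / 2 := by positivity
  have key : Real.sin (α + ε * α / 2) ≤ (1 + ε) * Real.sin α := by
    rw [Real.sin_add]
    have h1 : Real.cos (ε * α / 2) ≤ 1 := Real.cos_le_one _
    have h2 : Real.cos α ≤ 1 := Real.cos_le_one _
    have h3 : Real.sin (ε * α / 2) ≤ ε * α / 2 := Real.sin_le hβ0
    have h4 : 0 ≤ Real.sin (ε * α / 2) :=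
      Real.sin_nonneg_of_nonneg_of_le_pi hβ0 (by nlinarith)
    nlinarith
  set φ := (1 + ε / 2) * θ with hφdef
  have hφ0 : 0 ≤ φ := by positivity
  have hφπ : φ ≤ π := by
    have : φ ≤ (5/4) * (π/3) := by
      apply mul_le_mul (by linarith) hθle hθ0 (by norm_num)
    linarith
  have hφhalf : φ / 2 = α + ε * α / 2 := by simp only [hφdef, hαdef]; ring
  have hsinφ0 : 0 ≤ Real.sin (φ / 2) :=
    Real.sin_nonneg_of_nonneg_of_le_pi (by positivity) (by linarith)
  -- double angle relations
  have hdθ : Real.cos θ = 1 - 2 * Real.sin α ^ 2 := by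
    have h1 := Real.cos_two_mul α
    have h2 := Real.sin_sq_add_cos_sq α
    have : 2 * α = θ := by simp only [hαdef]; ring
    rw [this] at h1; linarith
  have hdφ : Real.cos φ = 1 - 2 * Real.sin (φ / 2) ^ 2 := by
    have h1 := Real.cos_two_mul (φ / 2)
    have h2 := Real.sin_sq_add_cos_sq (φ / 2)
    have : 2 * (φ / 2) = φ := by ring
    rw [this] at h1; linarith
  have hs2 : Real.sin α ^ 2 = r ^ 2 / 4 := by
    rw [hdθ] at hcosθ; linarith
  have hcosφ : 1 - (1 + ε) ^ 2 * r ^ 2 / 2 ≤ Real.cos φ := by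
    rw [hφhalf] at hdφ hsinφ0
    have hsq : Real.sin (α + ε * α / 2) ^ 2 ≤ (1 + ε) ^ 2 * (r ^ 2 / 4) := by
      calc Real.sin (α + ε * α / 2) ^ 2 ≤ ((1 + ε) * Real.sin α) ^ 2 :=
            pow_le_pow_left₀ hsinφ0 key 2
        _ = (1 + ε) ^ 2 * Real.sin α ^ 2 := by ring
        _ = (1 + ε) ^ 2 * (r ^ 2 / 4) := by rw [hs2]
    linarith
  -- inner product bound
  have hinner : ⟪x, y⟫ = 1 - ‖x - y‖ ^ 2 / 2 := by
    have := norm_sub_sq_real x y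
    rw [hx, hy] at this; linarith
  have hip_le : ⟪x, y⟫ ≤ 1 - (1 + ε) ^ 2 * r ^ 2 / 2 := by
    have h1 : (1 + ε) * r ≤ ‖x - y‖ := h
    have h2 : 0 ≤ (1 + ε) * r := by positivity
    have h3 : ((1 + ε) * r) ^ 2 ≤ ‖x - y‖ ^ 2 := pow_le_pow_left₀ h2 h1 2
    have h4 : ((1 + ε) * r) ^ 2 = (1 + ε) ^ 2 * r ^ 2 := by ring
    linarith
  calc Real.arccos ⟪x, y⟫ ≥ Real.arccos (Real.cos φ) := by
        apply anti; linarith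
    _ = φ := Real.arccos_cos hφ0 hφπ
end

section
/- Let r ∈ (0, 0.2] and ε ∈ (0, 1/2]. Set θ_r = arccos(1 − r²/2) and q = ⌊π/(2θ_r)⌋. Then (1 − 2(1 + ε/2)θ_r/π)^q < (1 − ε/10)·(1 − 2θ_r/π)^q. -/
lemma bernoulli_recip (t : ℝ) (h0 : 0 ≤ t) (h1 : t ≤ 1) (q : ℕ) :
    (1 - t) ^ q * (1 + q * t) ≤ 1 := by
  have h2 : 1 + (q : ℝ) * t ≤ (1 + t) ^ q := by
    have := one_add_mul_le_pow (by linarith : (-2:ℝ) ≤ t) q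
    linarith
  calc (1 - t) ^ q * (1 + q * t) ≤ (1 - t) ^ q * (1 + t) ^ q :=
        mul_le_mul_of_nonneg_left h2 (pow_nonneg (by linarith) q)
    _ = ((1 - t) * (1 + t)) ^ q := (mul_pow _ _ _).symm
    _ ≤ 1 := pow_le_one₀ (by nlinarith) (by nlinarith)

theorem amplified_gap (r ε : ℝ) (hr0 : 0 < r) (hr : r ≤ 0.2) (hε0 : 0 < ε) (hε : ε ≤ 1 / 2) :
    (1 - 2 * (1 + ε / 2) * Real.arccos (1 - r ^ 2 / 2) / Real.pi) ^
        ⌊Real.pi / (2 * Real.arccos (1 - r ^ 2 / 2))⌋₊ <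
      (1 - ε / 10) * (1 - 2 * Real.arccos (1 - r ^ 2 / 2) / Real.pi) ^
        ⌊Real.pi / (2 * Real.arccos (1 - r ^ 2 / 2))⌋₊ := by
  have hpi : 0 < Real.pi := Real.pi_pos
  set θ := Real.arccos (1 - r ^ 2 / 2) with hθdef
  have hθ0 : 0 < θ := Real.arccos_pos.mpr (by nlinarith)
  have hθle : θ ≤ Real.pi / 3 := by
    have h1 : Real.arccos (1/2) = Real.pi / 3 := by
      rw [← Real.cos_pi_div_three, Real.arccos_cos (by positivity) (by linarith)]
    have hm1 : (1 - r ^ 2 / 2) ∈ Set.Icc (-1:ℝ) 1 := by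
      constructor <;> nlinarith
    have hm2 : (1/2 : ℝ) ∈ Set.Icc (-1:ℝ) 1 := by norm_num
    have h2 : θ ≤ Real.arccos (1/2) :=
      (Real.strictAntiOn_arccos.le_iff_ge hm1 hm2).mpr (by nlinarith)
    linarith
  set q := ⌊Real.pi / (2 * θ)⌋₊ with hqdef
  set x := 2 * θ / Real.pi with hxdef
  have hx0 : 0 < x := by positivity
  have hxle : x ≤ 2 / 3 := by
    rw [hxdef, div_le_iff₀ hpi]
    linarith
  have hq : 1 - x < q * x := by
    have h := Nat.lt_floor_add_one (Real.pi / (2 * θ))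
    rw [← hqdef] at h
    have h2 : Real.pi < ((q : ℝ) + 1) * (2 * θ) := by
      rw [div_lt_iff₀ (by positivity)] at h
      linarith
    rw [← mul_lt_mul_iff_left₀ hpi]
    have e1 : x * Real.pi = 2 * θ := by rw [hxdef]; field_simp
    have e2 : (q : ℝ) * x * Real.pi = (q : ℝ) * (2 * θ) := by
      rw [mul_assoc, e1]
    nlinarith
  set y := 1 - x with hydef
  have hy3 : 1 / 3 ≤ y := by rw [hydef]; linarith
  have hy0 : 0 < y := by linarith
  set t := ε / 2 * x / y with htdef
  have ht0 : 0 < t := by positivity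
  have ht1 : t ≤ 1 := by
    rw [htdef, div_le_one hy0]
    nlinarith
  have hqt : ε / 2 < q * t := by
    rw [htdef]
    have e : (q : ℝ) * (ε / 2 * x / y) = (ε / 2) * ((q * x) / y) := by ring
    rw [e]
    have h1 : 1 < q * x / y := by rw [lt_div_iff₀ hy0]; linarith
    nlinarith
  have hkey : (1 - t) ^ q < 1 - ε / 10 := by
    have hb := bernoulli_recip t ht0.le ht1 q
    have hpos : (0:ℝ) < 1 + q * t := by positivity
    have h2 : 1 < (1 - ε / 10) * (1 + q * t) := by nlinarith
    nlinarith [pow_nonneg (by linarith : (0:ℝ) ≤ 1 - t) q]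
  have hbase : 1 - 2 * (1 + ε / 2) * θ / Real.pi = y * (1 - t) := by
    have h1 : y * (1 - t) = y - ε / 2 * x := by
      rw [htdef]; field_simp
    rw [h1, hydef, hxdef]; ring
  rw [hbase, mul_pow]
  have hyq : (0:ℝ) < y ^ q := by positivity
  calc y ^ q * (1 - t) ^ q < y ^ q * (1 - ε / 10) :=
        mul_lt_mul_of_pos_left hkey hyq
    _ = (1 - ε / 10) * y ^ q := by ring
end

section
/- Let r ∈ (0, 0.2]. Set θ_r = arccos(1 − r²/2) and q = ⌊π/(2θ_r)⌋. Then 0.3 ≤ (1 − 2θ_r/π)^q ≤ 0.5. -/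
theorem power_bounds (r : ℝ) (hr0 : 0 < r) (hr : r ≤ 0.2) :
    0.3 ≤ (1 - 2 * Real.arccos (1 - r ^ 2 / 2) / Real.pi) ^
        ⌊Real.pi / (2 * Real.arccos (1 - r ^ 2 / 2))⌋₊ ∧
      (1 - 2 * Real.arccos (1 - r ^ 2 / 2) / Real.pi) ^
        ⌊Real.pi / (2 * Real.arccos (1 - r ^ 2 / 2))⌋₊ ≤ 0.5 := by
  have hr2 : r ^ 2 ≤ 0.04 := by nlinarith
  set θ := Real.arccos (1 - r ^ 2 / 2) with hθdef
  have hθpos : 0 < θ := Real.arccos_pos.2 (by nlinarith)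
  have hcosθ : Real.cos θ = 1 - r ^ 2 / 2 :=
    Real.cos_arccos (by nlinarith) (by nlinarith)
  have hpi : (3.14 : ℝ) < Real.pi := by
    have := Real.pi_gt_d6; linarith
  have hcos21 : Real.cos 0.21 ≤ 0.98 := by
    have h := abs_le.1 (Real.cos_bound (x := 0.21) (by rw [abs_of_pos] <;> norm_num))
    rw [abs_of_pos (by norm_num : (0:ℝ) < 0.21)] at h
    nlinarith [h.2]
  have hθle : θ ≤ 0.21 := by
    by_contra h
    push_neg at h
    have h1 : Real.cos θ < Real.cos 0.21 :=
      Real.strictAntiOn_cos ⟨by norm_num, by linarith⟩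
        ⟨Real.arccos_nonneg _, Real.arccos_le_pi _⟩ h
    nlinarith [hcosθ]
  set t : ℝ := 2 * θ / Real.pi with htdef
  have htpos : 0 < t := by positivity
  have htle : t ≤ 1 / 7 := by
    rw [htdef, div_le_div_iff₀ (by linarith) (by norm_num)]
    linarith
  have h1t : (0:ℝ) < 1 - t := by linarith
  have htπ : t * Real.pi = 2 * θ := by
    rw [htdef]; field_simp
  set q : ℕ := ⌊Real.pi / (2 * θ)⌋₊ with hqdef
  have hfle : (q : ℝ) * (2 * θ) ≤ Real.pi := by
    have h := Nat.floor_le (show (0:ℝ) ≤ Real.pi / (2 * θ) by positivity)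
    rw [le_div_iff₀ (by linarith)] at h
    exact h
  have hflt : Real.pi < ((q : ℝ) + 1) * (2 * θ) := by
    have h := Nat.lt_floor_add_one (Real.pi / (2 * θ))
    rw [div_lt_iff₀ (by linarith)] at h
    exact_mod_cast h
  clear_value θ t q
  have hqt_le : (q : ℝ) * t ≤ 1 := by
    refine le_of_mul_le_mul_right ?_ (show (0:ℝ) < Real.pi by linarith)
    nlinarith [hfle, htπ]
  have hqt_ge : 1 - t < (q : ℝ) * t := by
    refine lt_of_mul_lt_mul_right ?_ (le_of_lt (show (0:ℝ) < Real.pi by linarith))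
    nlinarith [hflt, htπ]
  have hqt_ge' : (6:ℝ)/7 < (q : ℝ) * t := by linarith
  -- key exponential comparisons
  have key1 : Real.exp (-(t / (1 - t))) ≤ 1 - t := by
    have h3 := Real.add_one_le_exp (t / (1 - t))
    have he : t / (1 - t) + 1 = (1 - t)⁻¹ := by
      field_simp
      ring
    rw [he] at h3
    rw [Real.exp_neg]
    exact (inv_le_comm₀ h1t (Real.exp_pos _)).1 h3
  have key2 : 1 - t ≤ Real.exp (-t) := by
    have := Real.add_one_le_exp (-t); linarith
  have e16 : Real.exp (1/6 : ℝ) ≤ 6/5 := by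
    have h := Real.add_one_le_exp (-(1/6 : ℝ))
    rw [Real.exp_neg, inv_eq_one_div, le_div_iff₀ (Real.exp_pos _)] at h
    nlinarith [h]
  have e76 : Real.exp (7/6 : ℝ) ≤ 10/3 := by
    rw [show (7/6:ℝ) = 1 + 1/6 by norm_num, Real.exp_add]
    calc Real.exp 1 * Real.exp (1/6) ≤ 2.7182818286 * (6/5) :=
          mul_le_mul Real.exp_one_lt_d9.le e16 (Real.exp_pos _).le (by norm_num)
      _ ≤ 10/3 := by norm_num
  have lb0 : (0.3:ℝ) ≤ Real.exp (-(7/6 : ℝ)) := by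
    rw [Real.exp_neg, le_inv_comm₀ (by norm_num) (Real.exp_pos _)]
    calc Real.exp (7/6:ℝ) ≤ 10/3 := e76
      _ ≤ (0.3:ℝ)⁻¹ := by norm_num
  have e67 : (2:ℝ) ≤ Real.exp (6/7 : ℝ) := by
    rw [show (6/7:ℝ) = 3/7 + 3/7 by norm_num, Real.exp_add]
    have h' : (10/7:ℝ) ≤ Real.exp (3/7) := by
      have := Real.add_one_le_exp (3/7 : ℝ); linarith
    calc (2:ℝ) ≤ (10/7) * (10/7) := by norm_num
      _ ≤ Real.exp (3/7) * Real.exp (3/7) :=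
          mul_le_mul h' h' (by norm_num) (Real.exp_pos _).le
  have ub0 : Real.exp (-(6/7 : ℝ)) ≤ 0.5 := by
    rw [Real.exp_neg, inv_le_comm₀ (Real.exp_pos _) (by norm_num)]
    calc (0.5:ℝ)⁻¹ = 2 := by norm_num
      _ ≤ Real.exp (6/7:ℝ) := e67
  have hdiv : (q:ℝ) * t / (1 - t) ≤ 7/6 := by
    rw [div_le_div_iff₀ h1t (by norm_num)]
    linarith
  constructor
  · calc (0.3:ℝ) ≤ Real.exp (-(7/6 : ℝ)) := lb0
      _ ≤ Real.exp ((q:ℝ) * (-(t/(1-t)))) := by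
          apply Real.exp_le_exp.2
          rw [show (q:ℝ) * (-(t/(1-t))) = -((q:ℝ) * t / (1-t)) by ring]
          linarith
      _ = Real.exp (-(t/(1-t))) ^ q := Real.exp_nat_mul _ q
      _ ≤ (1 - t) ^ q := pow_le_pow_left₀ (Real.exp_pos _).le key1 q
  · calc (1 - t) ^ q ≤ Real.exp (-t) ^ q := pow_le_pow_left₀ (by linarith) key2 q
      _ = Real.exp ((q:ℝ) * (-t)) := (Real.exp_nat_mul _ q).symm
      _ ≤ Real.exp (-(6/7 : ℝ)) := by
          apply Real.exp_le_exp.2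
          rw [show (q:ℝ) * (-t) = -((q:ℝ) * t) by ring]
          linarith
      _ ≤ 0.5 := ub0
end

section
/- Let d ≥ 1, let u be a nonzero vector in ℝ^d, let v be a random vector distributed according to the uniform probability measure on the unit sphere S^{d−1}, and let t ∈ (0, 1]. Then the probability that ⟨u, v⟩² ≤ t·‖u‖² is at most √(e·d·t). -/
open MeasureTheory Metric

open scoped RealInnerProductSpace

open scoped ENNReal Pointwise

/-- The uniform (normalized rotation-invariant surface) probability measure on the unit
sphere of `ℝ^d`. -/
noncomputable def uniformSphere (d : ℕ) :
    Measure (sphere (0 : EuclideanSpace ℝ (Fin d)) 1) :=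
  ((volume : Measure (EuclideanSpace ℝ (Fin d))).toSphere Set.univ)⁻¹ •
    (volume : Measure (EuclideanSpace ℝ (Fin d))).toSphere

lemma gamma_ratio (d : ℕ) (hd : 1 ≤ d) :
    2 * Real.Gamma ((d:ℝ)/2+1) ≤
      Real.sqrt (Real.exp 1 * d) * Real.sqrt Real.pi * Real.Gamma (((d:ℝ)+1)/2) := by
  have hd1 : (1:ℝ) ≤ d := by exact_mod_cast hd
  set a : ℝ := ((d:ℝ)+1)/2 with ha
  have ha0 : 0 < a := by positivity
  have hGa : 0 < Real.Gamma a := Real.Gamma_pos_of_pos ha0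
  have hconv := Real.convexOn_log_Gamma.2 (Set.mem_Ioi.2 ha0)
    (Set.mem_Ioi.2 (by linarith : (0:ℝ) < a + 1))
    (by norm_num : (0:ℝ) ≤ (1:ℝ)/2) (by norm_num : (0:ℝ) ≤ (1:ℝ)/2) (by norm_num)
  have hmid : (1/2 : ℝ) • a + (1/2 : ℝ) • (a+1) = (d:ℝ)/2 + 1 := by
    simp only [smul_eq_mul]; field_simp [ha]; ring
  rw [hmid] at hconv
  have hG1 : Real.Gamma (a+1) = a * Real.Gamma a := Real.Gamma_add_one (ne_of_gt ha0)
  have hGmid : 0 < Real.Gamma ((d:ℝ)/2+1) := Real.Gamma_pos_of_pos (by positivity)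
  have key : Real.Gamma ((d:ℝ)/2+1) ≤ Real.sqrt a * Real.Gamma a := by
    have : Real.log (Real.Gamma ((d:ℝ)/2+1)) ≤ Real.log (Real.sqrt a * Real.Gamma a) := by
      have h2 : Real.log (Real.sqrt a * Real.Gamma a)
          = (1/2) * Real.log a + Real.log (Real.Gamma a) := by
        rw [Real.log_mul (by positivity) (ne_of_gt hGa), Real.log_sqrt ha0.le]; ring
      simp only [Function.comp] at hconv
      rw [hG1, Real.log_mul (ne_of_gt ha0) (ne_of_gt hGa)] at hconv
      rw [h2]; simp only [smul_eq_mul] at hconv; linarith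
    exact (Real.log_le_log_iff hGmid (by positivity)).1 this
  have h4a : 2 * Real.sqrt a ≤ Real.sqrt (Real.exp 1 * d) * Real.sqrt Real.pi := by
    rw [← Real.sqrt_mul (by positivity), ← Real.sqrt_mul_self (by norm_num : (0:ℝ) ≤ 2),
      ← Real.sqrt_mul (by positivity)]
    apply Real.sqrt_le_sqrt
    have he : (2.7:ℝ) < Real.exp 1 := by
      have := Real.exp_one_gt_d9; linarith
    have hpi := Real.pi_gt_three
    have h8 : (8:ℝ) ≤ Real.exp 1 * Real.pi := by nlinarith
    have hx : (2:ℝ)*2*a = 2*(d:ℝ)+2 := by rw [ha]; ring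
    nlinarith
  calc 2 * Real.Gamma ((d:ℝ)/2+1) ≤ 2 * (Real.sqrt a * Real.Gamma a) := by nlinarith
    _ ≤ Real.sqrt (Real.exp 1 * d) * Real.sqrt Real.pi * Real.Gamma a := by
        nlinarith [Real.sqrt_nonneg a]

lemma real_ineq (n : ℕ) (s : ℝ) (hs0 : 0 < s) :
    ((n+1:ℕ):ℝ) * (2*s*(Real.sqrt Real.pi ^ n / Real.Gamma ((n:ℝ)/2+1))) ≤
      Real.sqrt (Real.exp 1 * ((n+1:ℕ):ℝ)) * s *
        (((n+1:ℕ):ℝ) * (Real.sqrt Real.pi ^ (n+1) / Real.Gamma (((n+1:ℕ):ℝ)/2+1))) := by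
  have hg := gamma_ratio (n+1) (by omega)
  have hcast : ((n:ℝ)/2+1) = (((n+1:ℕ):ℝ)+1)/2 := by push_cast; ring
  have hGa : 0 < Real.Gamma ((((n+1:ℕ):ℝ)+1)/2) := Real.Gamma_pos_of_pos (by positivity)
  have hGb : 0 < Real.Gamma (((n+1:ℕ):ℝ)/2+1) := Real.Gamma_pos_of_pos (by positivity)
  rw [hcast, pow_succ]
  have key : (((n+1:ℕ):ℝ) * (2*s*Real.sqrt Real.pi ^ n)) / Real.Gamma ((((n+1:ℕ):ℝ)+1)/2) ≤
      (Real.sqrt (Real.exp 1 * ((n+1:ℕ):ℝ)) * s *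
          (((n+1:ℕ):ℝ) * (Real.sqrt Real.pi ^ n * Real.sqrt Real.pi)))
        / Real.Gamma (((n+1:ℕ):ℝ)/2+1) := by
    rw [div_le_div_iff₀ hGa hGb]
    nlinarith [mul_le_mul_of_nonneg_left hg
      (by positivity : (0:ℝ) ≤ ((n+1:ℕ):ℝ) * s * Real.sqrt Real.pi ^ n)]
  calc ((n+1:ℕ):ℝ) * (2*s*(Real.sqrt Real.pi ^ n / Real.Gamma ((((n+1:ℕ):ℝ)+1)/2)))
      = (((n+1:ℕ):ℝ) * (2*s*Real.sqrt Real.pi ^ n)) / Real.Gamma ((((n+1:ℕ):ℝ)+1)/2) := by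
        ring
    _ ≤ _ := key
    _ = Real.sqrt (Real.exp 1 * ((n+1:ℕ):ℝ)) * s *
        (((n+1:ℕ):ℝ) * (Real.sqrt Real.pi ^ n * Real.sqrt Real.pi /
          Real.Gamma (((n+1:ℕ):ℝ)/2+1))) := by ring

lemma sum_sq_lt_one_iff {n : ℕ} (x : EuclideanSpace ℝ (Fin n)) :
    ‖x‖ < 1 ↔ ∑ i, x i ^ 2 < 1 := by
  rw [EuclideanSpace.norm_eq]
  rw [show (1:ℝ) = Real.sqrt 1 by simp]
  rw [Real.sqrt_lt_sqrt_iff (by positivity)]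
  simp [sq_abs]

lemma ball_volume_pi (n : ℕ) :
    (volume {z : Fin n → ℝ | ∑ j, z j ^ 2 < 1}) =
      ENNReal.ofReal (Real.sqrt Real.pi ^ n / Real.Gamma ((n:ℝ)/2+1)) := by
  rcases Nat.eq_zero_or_pos n with rfl | hn
  · simp only [Finset.univ_eq_empty, Finset.sum_empty, pow_zero]
    rw [show {z : Fin 0 → ℝ | (0:ℝ) < 1} = Set.univ by ext z; simp]
    rw [show ((0:ℕ):ℝ)/2 + 1 = 1 by norm_num, Real.Gamma_one]
    simp [MeasureTheory.volume_pi, Measure.pi_univ]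
  have : Nonempty (Fin n) := ⟨⟨0, hn⟩⟩
  have hmp := EuclideanSpace.volume_preserving_symm_measurableEquiv_toLp (Fin n)
  have hZm : MeasurableSet {z : Fin n → ℝ | ∑ j, z j ^ 2 < 1} := by
    apply measurableSet_lt _ measurable_const
    exact Finset.measurable_sum _ fun i _ => (measurable_pi_apply i).pow_const 2
  rw [← hmp.measure_preimage hZm.nullMeasurableSet]
  have : (MeasurableEquiv.toLp 2 (Fin n → ℝ)).symm ⁻¹' {z : Fin n → ℝ | ∑ j, z j ^ 2 < 1}
      = ball (0 : EuclideanSpace ℝ (Fin n)) 1 := by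
    ext x
    simp only [Set.mem_preimage, Set.mem_setOf_eq, mem_ball_zero_iff]
    rw [sum_sq_lt_one_iff]
    rfl
  rw [this, EuclideanSpace.volume_ball]
  simp

lemma slab_volume (n : ℕ) (s : ℝ) (hs : 0 ≤ s) :
    volume {x : EuclideanSpace ℝ (Fin (n+1)) | ‖x‖ < 1 ∧ |x 0| ≤ s} ≤
      ENNReal.ofReal (2*s) *
        ENNReal.ofReal (Real.sqrt Real.pi ^ n / Real.Gamma ((n:ℝ)/2+1)) := by
  have hmp := EuclideanSpace.volume_preserving_symm_measurableEquiv_toLp (Fin (n+1))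
  set T' : Set (Fin (n+1) → ℝ) := {y | (∑ i, y i ^ 2) < 1 ∧ |y 0| ≤ s} with hT'
  have hT'm : MeasurableSet T' := by
    have h1 : T' = {y : Fin (n+1) → ℝ | (∑ i, y i ^ 2) < 1} ∩ {y | |y 0| ≤ s} := rfl
    rw [h1]
    exact (measurableSet_lt (Finset.measurable_sum _ fun i _ =>
      (measurable_pi_apply i).pow_const 2) measurable_const).inter
      (measurableSet_le (measurable_pi_apply 0).abs measurable_const)
  have hset : {x : EuclideanSpace ℝ (Fin (n+1)) | ‖x‖ < 1 ∧ |x 0| ≤ s}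
      = (MeasurableEquiv.toLp 2 (Fin (n+1) → ℝ)).symm ⁻¹' T' := by
    ext x
    simp only [Set.mem_preimage, Set.mem_setOf_eq, hT']
    rw [sum_sq_lt_one_iff]
    rfl
  rw [hset, hmp.measure_preimage hT'm.nullMeasurableSet]
  have hg := volume_preserving_piFinSuccAbove (fun _ : Fin (n+1) => ℝ) 0
  set Z : Set (Fin n → ℝ) := {z | ∑ j, z j ^ 2 < 1} with hZ
  have hZm : MeasurableSet Z := by
    apply measurableSet_lt _ measurable_const
    exact Finset.measurable_sum _ fun i _ => (measurable_pi_apply i).pow_const 2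
  have hsub : T' ⊆ (MeasurableEquiv.piFinSuccAbove (fun _ : Fin (n+1) => ℝ) 0) ⁻¹'
      (Set.Icc (-s) s ×ˢ Z) := by
    intro y hy
    obtain ⟨h1, h2⟩ := hy
    constructor
    · exact abs_le.1 h2
    · simp only [hZ, Set.mem_setOf_eq]
      have := Fin.sum_univ_succAbove (fun i => y i ^ 2) 0
      have h0 : 0 ≤ y 0 ^ 2 := sq_nonneg _
      simp only [MeasurableEquiv.piFinSuccAbove]
      calc ∑ j : Fin n, y ((0:Fin (n+1)).succAbove j) ^ 2
          ≤ ∑ i, y i ^ 2 := by rw [this]; linarith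
        _ < 1 := h1
  calc volume T' ≤ volume ((MeasurableEquiv.piFinSuccAbove (fun _ : Fin (n+1) => ℝ) 0) ⁻¹'
        (Set.Icc (-s) s ×ˢ Z)) := measure_mono hsub
    _ = volume (Set.Icc (-s) s ×ˢ Z) :=
        hg.measure_preimage (measurableSet_Icc.prod hZm).nullMeasurableSet
    _ = volume (Set.Icc (-s) s) * volume Z := by
        rw [MeasureTheory.Measure.volume_eq_prod, Measure.prod_prod]
    _ = ENNReal.ofReal (2*s) *
        ENNReal.ofReal (Real.sqrt Real.pi ^ n / Real.Gamma ((n:ℝ)/2+1)) := by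
        rw [Real.volume_Icc, ball_volume_pi]
        congr 1
        ring_nf

theorem random_projection_anticoncentration (d : ℕ) (hd : 1 ≤ d)
    (u : EuclideanSpace ℝ (Fin d)) (hu : u ≠ 0) (t : ℝ) (ht0 : 0 < t) (ht1 : t ≤ 1) :
    uniformSphere d
        {v : sphere (0 : EuclideanSpace ℝ (Fin d)) 1 |
          ⟪u, (v : EuclideanSpace ℝ (Fin d))⟫ ^ 2 ≤ t * ‖u‖ ^ 2} ≤
      ENNReal.ofReal (Real.sqrt (Real.exp 1 * d * t)) := by
  obtain ⟨n, rfl⟩ : ∃ n, d = n + 1 := ⟨d - 1, (Nat.succ_pred_eq_of_pos hd).symm⟩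
  set s : ℝ := Real.sqrt t with hs
  have hs0 : 0 < s := Real.sqrt_pos.2 ht0
  have hnu : 0 < ‖u‖ := norm_pos_iff.2 hu
  set w : EuclideanSpace ℝ (Fin (n+1)) := ‖u‖⁻¹ • u with hwdef
  have hw : ‖w‖ = 1 := norm_smul_inv_norm hu
  have hone : Orthonormal ℝ (({(0 : Fin (n+1))} : Set (Fin (n+1))).restrict
      (fun _ : Fin (n+1) => w)) := by
    constructor
    · intro i; exact hw
    · intro i j hij
      exfalso
      exact hij (Subtype.ext (i.2.trans j.2.symm))
  obtain ⟨b, hb⟩ := hone.exists_orthonormalBasis_extension_of_card_eq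
    (by simp [finrank_euclideanSpace])
  have hb0 : b 0 = w := hb 0 rfl
  set A : Set (sphere (0 : EuclideanSpace ℝ (Fin (n+1))) 1) :=
    {v : sphere (0 : EuclideanSpace ℝ (Fin (n+1))) 1 |
      ⟪u, (v : EuclideanSpace ℝ (Fin (n+1)))⟫ ^ 2 ≤ t * ‖u‖ ^ 2} with hA
  have hAm : MeasurableSet A := by
    have hc : Continuous fun v : sphere (0 : EuclideanSpace ℝ (Fin (n+1))) 1 =>
        ⟪u, (v : EuclideanSpace ℝ (Fin (n+1)))⟫ ^ 2 :=
      (Continuous.inner continuous_const continuous_subtype_val).pow 2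
    exact measurableSet_le hc.measurable measurable_const
  set T : Set (EuclideanSpace ℝ (Fin (n+1))) :=
    {x : EuclideanSpace ℝ (Fin (n+1)) | ‖x‖ < 1 ∧ |x 0| ≤ s} with hT
  have hTm : MeasurableSet T := by
    have h1 : Continuous fun x : EuclideanSpace ℝ (Fin (n+1)) => |x 0| :=
      ((EuclideanSpace.proj (0 : Fin (n+1))).continuous).abs
    exact (measurableSet_lt continuous_norm.measurable measurable_const).inter
      (measurableSet_le h1.measurable measurable_const)
  have hsub : Set.Ioo (0:ℝ) 1 • (Subtype.val '' A) ⊆ b.repr ⁻¹' T := by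
    rintro x hx
    rw [Set.mem_smul] at hx
    obtain ⟨r, hr, y, hy, rfl⟩ := hx
    obtain ⟨v, hvA, rfl⟩ := hy
    obtain ⟨hr0, hr1⟩ := hr
    have hv1 : ‖(v : EuclideanSpace ℝ (Fin (n+1)))‖ = 1 := by
      have := v.2; rwa [mem_sphere_zero_iff_norm] at this
    have hinner : |⟪u, (v : EuclideanSpace ℝ (Fin (n+1)))⟫| ≤ s * ‖u‖ := by
      have h1 := Real.sqrt_le_sqrt hvA
      rwa [Real.sqrt_sq_eq_abs, Real.sqrt_mul ht0.le, Real.sqrt_sq hnu.le] at h1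
    constructor
    · show ‖b.repr (r • (v : EuclideanSpace ℝ (Fin (n+1))))‖ < 1
      rw [b.repr.norm_map, norm_smul, hv1, mul_one, Real.norm_eq_abs,
        abs_of_pos hr0]
      exact hr1
    · show |b.repr (r • (v : EuclideanSpace ℝ (Fin (n+1)))) 0| ≤ s
      rw [OrthonormalBasis.repr_apply_apply, hb0, real_inner_smul_right, hwdef,
        real_inner_smul_left, abs_mul, abs_mul, abs_of_pos hr0,
        abs_of_nonneg (inv_nonneg.2 hnu.le)]
      calc r * (‖u‖⁻¹ * |⟪u, (v : EuclideanSpace ℝ (Fin (n+1)))⟫|)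
          ≤ 1 * (‖u‖⁻¹ * (s * ‖u‖)) := by
            apply mul_le_mul hr1.le _ (by positivity) zero_le_one
            exact mul_le_mul_of_nonneg_left hinner (by positivity)
        _ = s := by field_simp
  have hcone : volume (Set.Ioo (0:ℝ) 1 • (Subtype.val '' A)) ≤
      ENNReal.ofReal (2*s) *
        ENNReal.ofReal (Real.sqrt Real.pi ^ n / Real.Gamma ((n:ℝ)/2+1)) := by
    calc volume (Set.Ioo (0:ℝ) 1 • (Subtype.val '' A)) ≤ volume (b.repr ⁻¹' T) :=
        measure_mono hsub
      _ = volume T := b.repr.measurePreserving.measure_preimage hTm.nullMeasurableSet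
      _ ≤ _ := slab_volume n s hs0.le
  rw [uniformSphere, Measure.smul_apply, smul_eq_mul]
  have hdim : Module.finrank ℝ (EuclideanSpace ℝ (Fin (n+1))) = n + 1 :=
    finrank_euclideanSpace_fin
  rw [Measure.toSphere_apply_univ, Measure.toSphere_apply' _ hAm, hdim]
  have hball : volume (ball (0 : EuclideanSpace ℝ (Fin (n+1))) 1) =
      ENNReal.ofReal (Real.sqrt Real.pi ^ (n+1) / Real.Gamma (((n+1:ℕ):ℝ)/2+1)) := by
    rw [EuclideanSpace.volume_ball]
    simp [Fintype.card_fin]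
  have hVDpos : 0 < Real.sqrt Real.pi ^ (n+1) / Real.Gamma (((n+1:ℕ):ℝ)/2+1) := by
    have := Real.Gamma_pos_of_pos (show (0:ℝ) < ((n+1:ℕ):ℝ)/2+1 by positivity)
    positivity
  have ha0 : (((n+1:ℕ) : ℝ≥0∞) * volume (ball (0 : EuclideanSpace ℝ (Fin (n+1))) 1)) ≠ 0 := by
    rw [hball]
    refine mul_ne_zero (by simp) ?_
    simp only [ne_eq, ENNReal.ofReal_eq_zero, not_le]
    exact hVDpos
  have hatop : (((n+1:ℕ) : ℝ≥0∞) * volume (ball (0 : EuclideanSpace ℝ (Fin (n+1))) 1)) ≠ ⊤ := by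
    rw [hball]; exact ENNReal.mul_ne_top (ENNReal.natCast_ne_top _) ENNReal.ofReal_ne_top
  have hsqrt : Real.sqrt (Real.exp 1 * ((n+1:ℕ):ℝ) * t)
      = Real.sqrt (Real.exp 1 * ((n+1:ℕ):ℝ)) * s := by
    rw [hs, Real.sqrt_mul (by positivity)]
  have hkey : ((n+1:ℕ) : ℝ≥0∞) * volume (Set.Ioo (0:ℝ) 1 • (Subtype.val '' A)) ≤
      ENNReal.ofReal (Real.sqrt (Real.exp 1 * ((n+1:ℕ):ℝ) * t)) *
        (((n+1:ℕ) : ℝ≥0∞) * volume (ball (0 : EuclideanSpace ℝ (Fin (n+1))) 1)) := by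
    calc ((n+1:ℕ) : ℝ≥0∞) * volume (Set.Ioo (0:ℝ) 1 • (Subtype.val '' A))
        ≤ ((n+1:ℕ) : ℝ≥0∞) * (ENNReal.ofReal (2*s) *
            ENNReal.ofReal (Real.sqrt Real.pi ^ n / Real.Gamma ((n:ℝ)/2+1))) :=
          mul_le_mul_right hcone _
      _ = ENNReal.ofReal (((n+1:ℕ):ℝ) *
            (2*s*(Real.sqrt Real.pi ^ n / Real.Gamma ((n:ℝ)/2+1)))) := by
          rw [← ENNReal.ofReal_mul (by positivity : (0:ℝ) ≤ 2*s),
            ← ENNReal.ofReal_natCast (n+1),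
            ← ENNReal.ofReal_mul (by positivity : (0:ℝ) ≤ ((n+1:ℕ):ℝ))]
      _ ≤ ENNReal.ofReal (Real.sqrt (Real.exp 1 * ((n+1:ℕ):ℝ)) * s *
            (((n+1:ℕ):ℝ) * (Real.sqrt Real.pi ^ (n+1) / Real.Gamma (((n+1:ℕ):ℝ)/2+1)))) :=
          ENNReal.ofReal_le_ofReal (real_ineq n s hs0)
      _ = ENNReal.ofReal (Real.sqrt (Real.exp 1 * ((n+1:ℕ):ℝ) * t)) *
          (((n+1:ℕ) : ℝ≥0∞) * volume (ball (0 : EuclideanSpace ℝ (Fin (n+1))) 1)) := by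
          rw [hball, hsqrt, ← ENNReal.ofReal_natCast (n+1),
            ← ENNReal.ofReal_mul (by positivity : (0:ℝ) ≤ ((n+1:ℕ):ℝ)),
            ← ENNReal.ofReal_mul (by positivity)]
  calc (((n+1:ℕ) : ℝ≥0∞) * volume (ball (0 : EuclideanSpace ℝ (Fin (n+1))) 1))⁻¹ *
        (((n+1:ℕ) : ℝ≥0∞) * volume (Set.Ioo (0:ℝ) 1 • (Subtype.val '' A)))
      ≤ (((n+1:ℕ) : ℝ≥0∞) * volume (ball (0 : EuclideanSpace ℝ (Fin (n+1))) 1))⁻¹ *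
        (ENNReal.ofReal (Real.sqrt (Real.exp 1 * ((n+1:ℕ):ℝ) * t)) *
          (((n+1:ℕ) : ℝ≥0∞) * volume (ball (0 : EuclideanSpace ℝ (Fin (n+1))) 1))) :=
        mul_le_mul_right hkey _
    _ = ENNReal.ofReal (Real.sqrt (Real.exp 1 * ((n+1:ℕ):ℝ) * t)) := by
        rw [← mul_assoc,
          mul_comm ((((n+1:ℕ) : ℝ≥0∞) *
            volume (ball (0 : EuclideanSpace ℝ (Fin (n+1))) 1))⁻¹),
          mul_assoc, ENNReal.inv_mul_cancel ha0 hatop, mul_one]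
end

section
/- Let d ≥ 1, let x, y be unit vectors in ℝ^d, and let v be a random vector distributed according to the uniform probability measure on the unit sphere S^{d−1}. Then E[sign(⟨x, v⟩)·sign(⟨y, v⟩)] = 1 − 2·arccos(⟨x, y⟩)/π. -/
open MeasureTheory Metric

open scoped RealInnerProductSpace

open scoped Real ENNReal

local notation:max "𝔼" d:max => EuclideanSpace ℝ (Fin d)

lemma measurable_realSign : Measurable Real.sign := by
  have : Real.sign = fun r : ℝ => if r < 0 then (-1 : ℝ) else if 0 < r then 1 else 0 := by
    funext r; rfl
  rw [this]
  refine Measurable.ite (measurableSet_lt measurable_id measurable_const) measurable_const ?_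
  exact Measurable.ite (measurableSet_lt measurable_const measurable_id) measurable_const
    measurable_const

lemma sign_mul_pos {r : ℝ} (hr : 0 < r) (t : ℝ) : Real.sign (r * t) = Real.sign t := by
  rcases lt_trichotomy t 0 with h | h | h
  · rw [Real.sign_of_neg h, Real.sign_of_neg (mul_neg_of_pos_of_neg hr h)]
  · simp [h, Real.sign_zero]
  · rw [Real.sign_of_pos h, Real.sign_of_pos (mul_pos hr h)]

/-- Integral of a Gaussian-weighted scale-invariant function as a product. -/
lemma gauss_polar (d : ℕ) (hd : 1 ≤ d) (G : (𝔼 d) → ℝ)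
    (hscale : ∀ (r : ℝ), 0 < r → ∀ v, G (r • v) = G v) :
    ∫ x : 𝔼 d, Real.exp (-‖x‖ ^ 2) * G x
      = (∫ v : sphere (0 : 𝔼 d) 1, G v
          ∂((volume : Measure (𝔼 d)).toSphere)) *
        (∫ r : Set.Ioi (0 : ℝ), Real.exp (-(r : ℝ) ^ 2)
          ∂(Measure.volumeIoiPow (d - 1))) := by
  haveI : Nontrivial (𝔼 d) := by
    apply Module.nontrivial_of_finrank_pos (R := ℝ)
    rw [finrank_euclideanSpace_fin]; omega
  have h1 : ∫ x : 𝔼 d, Real.exp (-‖x‖ ^ 2) * G x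
      = ∫ x : ({0}ᶜ : Set (𝔼 d)), Real.exp (-‖(x : 𝔼 d)‖ ^ 2) * G x
          ∂((volume : Measure (𝔼 d)).comap Subtype.val) := by
    rw [integral_subtype_comap (measurableSet_singleton _).compl
      (fun x => Real.exp (-‖x‖ ^ 2) * G x), MeasureTheory.restrict_compl_singleton]
  have h2 := (volume : Measure (𝔼 d)).measurePreserving_homeomorphUnitSphereProd.integral_comp
      (Homeomorph.measurableEmbedding _)
      (fun p : sphere (0 : 𝔼 d) 1 × Set.Ioi (0 : ℝ) => G p.1 * Real.exp (-(p.2 : ℝ) ^ 2))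
  rw [finrank_euclideanSpace_fin] at h2
  have key : (fun x : ({0}ᶜ : Set (𝔼 d)) => Real.exp (-‖(x : 𝔼 d)‖ ^ 2) * G x)
      = fun x : ({0}ᶜ : Set (𝔼 d)) =>
        (fun p : sphere (0 : 𝔼 d) 1 × Set.Ioi (0 : ℝ) => G p.1 * Real.exp (-(p.2 : ℝ) ^ 2))
          (homeomorphUnitSphereProd (𝔼 d) x) := by
    funext x
    have hx : (x : 𝔼 d) ≠ 0 := x.2
    have hnorm : (0 : ℝ) < ‖(x : 𝔼 d)‖ := norm_pos_iff.2 hx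
    simp only [homeomorphUnitSphereProd_apply_fst_coe, homeomorphUnitSphereProd_apply_snd_coe]
    have := by
      have := hscale ‖(x : 𝔼 d)‖ hnorm (‖(x : 𝔼 d)‖⁻¹ • (x : 𝔼 d))
      rwa [smul_smul, mul_inv_cancel₀ hnorm.ne', one_smul] at this
    rw [← this, mul_comm]
  rw [h1, key, h2, integral_prod_mul (fun v : sphere (0 : 𝔼 d) 1 => G v)
    (fun r : Set.Ioi (0 : ℝ) => Real.exp (-(r : ℝ) ^ 2))]

/-- Average over the uniform sphere measure as a ratio of Gaussian integrals. -/
lemma sphere_avg (d : ℕ) (hd : 1 ≤ d) (G : (𝔼 d) → ℝ)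
    (hscale : ∀ (r : ℝ), 0 < r → ∀ v, G (r • v) = G v) :
    ∫ v : sphere (0 : 𝔼 d) 1, G v ∂(uniformSphere d)
      = (∫ x : 𝔼 d, Real.exp (-‖x‖ ^ 2) * G x)
        / ∫ x : 𝔼 d, Real.exp (-‖x‖ ^ 2) := by
  set c : ℝ := ∫ r : Set.Ioi (0 : ℝ), Real.exp (-(r : ℝ) ^ 2)
      ∂(Measure.volumeIoiPow (d - 1)) with hc
  have hB : ∫ x : 𝔼 d, Real.exp (-‖x‖ ^ 2) = (π : ℝ) ^ ((d : ℝ) / 2) := by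
    have := GaussianFourier.integral_rexp_neg_mul_sq_norm (V := 𝔼 d) (b := 1) one_pos
    simp only [neg_mul, one_mul, div_one, finrank_euclideanSpace_fin] at this
    exact this
  have hBpos : (0 : ℝ) < ∫ x : 𝔼 d, Real.exp (-‖x‖ ^ 2) := by
    rw [hB]; positivity
  have hS1 : ∫ x : 𝔼 d, Real.exp (-‖x‖ ^ 2)
      = ((volume : Measure (𝔼 d)).toSphere Set.univ).toReal * c := by
    have h := gauss_polar d hd (fun _ => 1) (fun r hr v => rfl)
    rw [integral_const] at h
    simp only [smul_eq_mul, mul_one] at h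
    rw [h, hc]
    rfl
  have hS1pos : 0 < ((volume : Measure (𝔼 d)).toSphere Set.univ).toReal := by
    refine ENNReal.toReal_pos ?_ (measure_ne_top _ _)
    rw [Measure.toSphere_apply_univ]
    have h1 : ((Module.finrank ℝ (𝔼 d) : ℝ≥0∞)) ≠ 0 := by
      rw [finrank_euclideanSpace_fin]
      exact_mod_cast Nat.one_le_iff_ne_zero.mp hd
    have h2 : (0 : ℝ≥0∞) < (volume : Measure (𝔼 d)) (ball 0 1) :=
      measure_ball_pos _ 0 one_pos
    exact (ENNReal.mul_pos h1 h2.ne').ne'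
  have hcne : c ≠ 0 := by
    intro h
    rw [h, mul_zero] at hS1
    exact hBpos.ne' hS1
  have hG := gauss_polar d hd G hscale
  rw [uniformSphere, integral_smul_measure, ENNReal.toReal_inv, smul_eq_mul, hG, hS1, ← hc,
    mul_div_mul_right _ _ hcne, div_eq_mul_inv, mul_comm]

/-- Reduction of a Gaussian integral of a function of two orthonormal coordinates
to two dimensions. -/
lemma chain (n : ℕ) (b : OrthonormalBasis (Fin (n + 2)) ℝ (𝔼 (n + 2))) (h : ℝ → ℝ → ℝ) :
    ∫ v : 𝔼 (n + 2), Real.exp (-‖v‖ ^ 2) * h ⟪b 0, v⟫ ⟪b 1, v⟫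
      = (∫ p : ℝ × ℝ, Real.exp (-(p.1 ^ 2 + p.2 ^ 2)) * h p.1 p.2) *
        (∫ u : {i : Fin (n + 2) // ¬ (i : ℕ) < 2} → ℝ, Real.exp (-∑ i, u i ^ 2)) := by
  classical
  -- Step A: coordinates via the orthonormal basis
  have hA := (b.measurePreserving_repr_symm).integral_comp
      (b.repr.symm.toHomeomorph.measurableEmbedding)
      (fun v : 𝔼 (n + 2) => Real.exp (-‖v‖ ^ 2) * h ⟪b 0, v⟫ ⟪b 1, v⟫)
  rw [← hA]
  simp only [LinearIsometryEquiv.norm_map, ← OrthonormalBasis.repr_apply_apply,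
    LinearIsometryEquiv.apply_symm_apply]
  -- Step B: from `EuclideanSpace` to the pi type
  have hB := (MeasurePreserving.symm _ (EuclideanSpace.volume_preserving_symm_measurableEquiv_toLp (Fin (n + 2)))).integral_comp
      (MeasurableEquiv.measurableEmbedding _)
      (fun w : 𝔼 (n + 2) => Real.exp (-‖w‖ ^ 2) * h (w 0) (w 1))
  rw [← hB]
  have hBpt : ∀ u : Fin (n + 2) → ℝ,
      Real.exp (-‖((MeasurableEquiv.toLp 2 (Fin (n + 2) → ℝ)).symm).symm u‖ ^ 2) *
          h ((((MeasurableEquiv.toLp 2 (Fin (n + 2) → ℝ)).symm).symm u) 0)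
            ((((MeasurableEquiv.toLp 2 (Fin (n + 2) → ℝ)).symm).symm u) 1)
        = Real.exp (-∑ i, u i ^ 2) * h (u 0) (u 1) := by
    intro u
    have hcoord : ∀ i, (((MeasurableEquiv.toLp 2 (Fin (n + 2) → ℝ)).symm).symm u) i = u i := by
      intro i
      rfl
    have hnorm : ‖((MeasurableEquiv.toLp 2 (Fin (n + 2) → ℝ)).symm).symm u‖ ^ 2 = ∑ i, u i ^ 2 := by
      rw [EuclideanSpace.norm_eq, Real.sq_sqrt (by positivity)]
      simp only [Real.norm_eq_abs, sq_abs, hcoord]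
    rw [hnorm, hcoord, hcoord]
  rw [show (fun u : Fin (n + 2) → ℝ =>
      Real.exp (-‖((MeasurableEquiv.toLp 2 (Fin (n + 2) → ℝ)).symm).symm u‖ ^ 2) *
        h ((((MeasurableEquiv.toLp 2 (Fin (n + 2) → ℝ)).symm).symm u) 0)
          ((((MeasurableEquiv.toLp 2 (Fin (n + 2) → ℝ)).symm).symm u) 1))
    = fun u : Fin (n + 2) → ℝ => Real.exp (-∑ i, u i ^ 2) * h (u 0) (u 1) from funext hBpt]
  -- Step C: split off the first two coordinates
  set p : Fin (n + 2) → Prop := fun i => (i : ℕ) < 2 with hp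
  have hC := (MeasurePreserving.symm _ (volume_preserving_piEquivPiSubtypeProd (fun _ : Fin (n + 2) => ℝ) p)).integral_comp
      (MeasurableEquiv.measurableEmbedding _)
      (fun u : Fin (n + 2) → ℝ => Real.exp (-∑ i, u i ^ 2) * h (u 0) (u 1))
  rw [← hC]
  have h0 : p 0 := by simp [hp]
  have h1 : p 1 := by simp [hp, Fin.val_one]
  have hCpt : ∀ z : ({i : Fin (n + 2) // p i} → ℝ) × ({i : Fin (n + 2) // ¬ p i} → ℝ),
      (fun u : Fin (n + 2) → ℝ => Real.exp (-∑ i, u i ^ 2) * h (u 0) (u 1))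
          ((MeasurableEquiv.piEquivPiSubtypeProd (fun _ : Fin (n + 2) => ℝ) p).symm z)
        = (Real.exp (-∑ i : {i : Fin (n + 2) // p i}, z.1 i ^ 2) * h (z.1 ⟨0, h0⟩) (z.1 ⟨1, h1⟩))
            * Real.exp (-∑ i : {i : Fin (n + 2) // ¬ p i}, z.2 i ^ 2) := by
    intro z
    have hz : ∀ i, (MeasurableEquiv.piEquivPiSubtypeProd (fun _ : Fin (n + 2) => ℝ) p).symm z i
        = if hi : p i then z.1 ⟨i, hi⟩ else z.2 ⟨i, hi⟩ := by
      intro i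
      rfl
    have hsum : ∑ i, ((MeasurableEquiv.piEquivPiSubtypeProd (fun _ : Fin (n + 2) => ℝ) p).symm z i) ^ 2
        = (∑ i : {i : Fin (n + 2) // p i}, z.1 i ^ 2)
          + ∑ i : {i : Fin (n + 2) // ¬ p i}, z.2 i ^ 2 := by
      rw [← Fintype.sum_subtype_add_sum_subtype p
        (fun i => ((MeasurableEquiv.piEquivPiSubtypeProd (fun _ : Fin (n + 2) => ℝ) p).symm z i) ^ 2)]
      congr 1
      · refine Finset.sum_congr rfl fun i _ => ?_
        rw [hz, dif_pos i.2]
      · refine Finset.sum_congr rfl fun i _ => ?_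
        rw [hz, dif_neg i.2]
    simp only [hz 0, hz 1, dif_pos h0, dif_pos h1, hsum, neg_add, Real.exp_add]
    ring
  rw [show (fun z => (fun u : Fin (n + 2) → ℝ => Real.exp (-∑ i, u i ^ 2) * h (u 0) (u 1))
      ((MeasurableEquiv.piEquivPiSubtypeProd (fun _ : Fin (n + 2) => ℝ) p).symm z))
    = fun z : ({i : Fin (n + 2) // p i} → ℝ) × ({i : Fin (n + 2) // ¬ p i} → ℝ) =>
        (Real.exp (-∑ i : {i : Fin (n + 2) // p i}, z.1 i ^ 2) * h (z.1 ⟨0, h0⟩) (z.1 ⟨1, h1⟩))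
          * Real.exp (-∑ i : {i : Fin (n + 2) // ¬ p i}, z.2 i ^ 2) from funext hCpt]
  rw [MeasureTheory.Measure.volume_eq_prod, integral_prod_mul
    (fun u : {i : Fin (n + 2) // p i} → ℝ =>
      Real.exp (-∑ i, u i ^ 2) * h (u ⟨0, h0⟩) (u ⟨1, h1⟩))
    (fun u : {i : Fin (n + 2) // ¬ p i} → ℝ => Real.exp (-∑ i, u i ^ 2))]
  congr 1
  -- Step D: reindex the two-element subtype by `Fin 2`
  set ε : Fin 2 ≃ {i : Fin (n + 2) // p i} :=
    { toFun := fun j => ⟨⟨(j : ℕ), by omega⟩, by simpa [hp] using j.2⟩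
      invFun := fun i => ⟨(i : Fin (n + 2)), by simpa [hp] using i.2⟩
      left_inv := fun j => by ext; rfl
      right_inv := fun i => by ext; rfl } with hε
  have hD := (volume_measurePreserving_piCongrLeft (fun _ : {i : Fin (n + 2) // p i} => ℝ) ε).integral_comp
      (MeasurableEquiv.measurableEmbedding _)
      (fun u : {i : Fin (n + 2) // p i} → ℝ =>
        Real.exp (-∑ i, u i ^ 2) * h (u ⟨0, h0⟩) (u ⟨1, h1⟩))
  rw [← hD]
  have hDpt : ∀ w : Fin 2 → ℝ,
      (fun u : {i : Fin (n + 2) // p i} → ℝ =>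
          Real.exp (-∑ i, u i ^ 2) * h (u ⟨0, h0⟩) (u ⟨1, h1⟩))
        ((MeasurableEquiv.piCongrLeft (fun _ : {i : Fin (n + 2) // p i} => ℝ) ε) w)
      = Real.exp (-(w 0 ^ 2 + w 1 ^ 2)) * h (w 0) (w 1) := by
    intro w
    have happ : ∀ j : Fin 2,
        (MeasurableEquiv.piCongrLeft (fun _ : {i : Fin (n + 2) // p i} => ℝ) ε) w (ε j) = w j :=
      fun j => MeasurableEquiv.piCongrLeft_apply_apply (β := fun _ : {i : Fin (n + 2) // p i} => ℝ) ε w j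
    have h0' : (⟨0, h0⟩ : {i : Fin (n + 2) // p i}) = ε 0 := by
      apply Subtype.ext; apply Fin.ext; simp [hε]
    have h1' : (⟨1, h1⟩ : {i : Fin (n + 2) // p i}) = ε 1 := by
      apply Subtype.ext; apply Fin.ext; simp [hε, Fin.val_one]
    have hsum : ∑ i : {i : Fin (n + 2) // p i},
        ((MeasurableEquiv.piCongrLeft (fun _ : {i : Fin (n + 2) // p i} => ℝ) ε) w i) ^ 2
        = ∑ j : Fin 2, w j ^ 2 := by
      rw [← Equiv.sum_comp ε]
      exact Finset.sum_congr rfl fun j _ => by rw [happ]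
    simp only [hsum, h0', h1', happ, Fin.sum_univ_two]
  rw [show (fun w : Fin 2 → ℝ => (fun u : {i : Fin (n + 2) // p i} → ℝ =>
        Real.exp (-∑ i, u i ^ 2) * h (u ⟨0, h0⟩) (u ⟨1, h1⟩))
      ((MeasurableEquiv.piCongrLeft (fun _ : {i : Fin (n + 2) // p i} => ℝ) ε) w))
    = fun w : Fin 2 → ℝ => Real.exp (-(w 0 ^ 2 + w 1 ^ 2)) * h (w 0) (w 1) from funext hDpt]
  -- Step E: from `Fin 2 → ℝ` to `ℝ × ℝ`
  have hE := (MeasurePreserving.symm _ (volume_preserving_piFinTwo (fun _ : Fin 2 => ℝ))).integral_comp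
      (MeasurableEquiv.measurableEmbedding _)
      (fun w : Fin 2 → ℝ => Real.exp (-(w 0 ^ 2 + w 1 ^ 2)) * h (w 0) (w 1))
  rw [← hE]
  refine integral_congr_ae (Filter.Eventually.of_forall fun q => ?_)
  have e0 : (MeasurableEquiv.piFinTwo (fun _ : Fin 2 => ℝ)).symm q 0 = q.1 := rfl
  have e1 : (MeasurableEquiv.piFinTwo (fun _ : Fin 2 => ℝ)).symm q 1 = q.2 := rfl
  simp only [e0, e1]

lemma radial_integral : ∫ r in Set.Ioi (0 : ℝ), r * Real.exp (-r ^ 2) = 1 / 2 := by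
  have hderiv : ∀ x ∈ Set.Ioi (0 : ℝ),
      HasDerivAt (fun r : ℝ => -Real.exp (-r ^ 2) / 2) (x * Real.exp (-x ^ 2)) x := by
    intro x _
    have h1 : HasDerivAt (fun r : ℝ => -r ^ 2) (-(2 * x)) x := by
      have := (hasDerivAt_pow 2 x).fun_neg
      simpa using this
    have h2 : HasDerivAt (fun r : ℝ => Real.exp (-r ^ 2))
        (Real.exp (-x ^ 2) * -(2 * x)) x := h1.exp
    have h3 : HasDerivAt (fun r : ℝ => -Real.exp (-r ^ 2) / 2)
        (-(Real.exp (-x ^ 2) * -(2 * x)) / 2) x := (h2.fun_neg).div_const 2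
    convert h3 using 1
    ring
  have hcont : ContinuousWithinAt (fun r : ℝ => -Real.exp (-r ^ 2) / 2) (Set.Ici 0) 0 := by
    apply Continuous.continuousWithinAt
    fun_prop
  have hint : IntegrableOn (fun x : ℝ => x * Real.exp (-x ^ 2)) (Set.Ioi 0) := by
    have := integrable_mul_exp_neg_mul_sq (b := 1) one_pos
    simp only [neg_mul, one_mul] at this
    exact this.integrableOn
  have htend : Filter.Tendsto (fun r : ℝ => -Real.exp (-r ^ 2) / 2) Filter.atTop (nhds 0) := by
    have h1 : Filter.Tendsto (fun r : ℝ => -r ^ 2) Filter.atTop Filter.atBot := by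
      have hp : Filter.Tendsto (fun x : ℝ => x ^ 2) Filter.atTop Filter.atTop :=
        Filter.tendsto_pow_atTop two_ne_zero
      exact Filter.tendsto_neg_atTop_atBot.comp hp
    have h2 : Filter.Tendsto (fun r : ℝ => Real.exp (-r ^ 2)) Filter.atTop (nhds 0) :=
      Real.tendsto_exp_atBot.comp h1
    have h3 := (h2.neg).div_const 2
    simpa using h3
  have := integral_Ioi_of_hasDerivAt_of_tendsto hcont hderiv hint htend
  rw [this]
  norm_num

lemma gauss_1d : ∫ x : ℝ, Real.exp (-x ^ 2) = Real.sqrt π := by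
  have := integral_gaussian 1
  simp only [neg_mul, one_mul, div_one] at this
  exact this

lemma Kval : ∫ q : ℝ × ℝ, Real.exp (-(q.1 ^ 2 + q.2 ^ 2)) = π := by
  rw [MeasureTheory.Measure.volume_eq_prod]
  rw [show (fun q : ℝ × ℝ => Real.exp (-(q.1 ^ 2 + q.2 ^ 2)))
      = fun q : ℝ × ℝ => Real.exp (-q.1 ^ 2) * Real.exp (-q.2 ^ 2) from
    funext fun q => by rw [← Real.exp_add]; ring_nf]
  rw [integral_prod_mul (fun x : ℝ => Real.exp (-x ^ 2)) (fun x : ℝ => Real.exp (-x ^ 2)),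
    gauss_1d, Real.mul_self_sqrt Real.pi_pos.le]

noncomputable def Sfun (α θ : ℝ) : ℝ :=
  Real.sign (Real.cos θ) * Real.sign (Real.cos (θ - α))

lemma Sfun_periodic (α : ℝ) : Function.Periodic (Sfun α) (2 * π) := by
  intro θ
  unfold Sfun
  rw [show θ + 2 * π - α = (θ - α) + 2 * π by ring, Real.cos_add_two_pi, Real.cos_add_two_pi]

lemma Sfun_intervalIntegrable (α a b : ℝ) : IntervalIntegrable (Sfun α) volume a b := by
  have hmeas : Measurable (Sfun α) := by
    have h : Measurable Real.sign := by
      have : Real.sign = fun r : ℝ => if r < 0 then (-1 : ℝ) else if 0 < r then 1 else 0 := by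
        funext r; rfl
      rw [this]
      refine Measurable.ite (measurableSet_lt measurable_id measurable_const) measurable_const ?_
      exact Measurable.ite (measurableSet_lt measurable_const measurable_id) measurable_const
        measurable_const
    exact ((h.comp Real.continuous_cos.measurable).mul
      (h.comp (Real.continuous_cos.comp (continuous_id.sub continuous_const)).measurable))
  rw [intervalIntegrable_iff]
  refine Integrable.mono' (g := fun _ => (1 : ℝ)) ?_ hmeas.aestronglyMeasurable.restrict ?_
  · exact integrableOn_const measure_Ioc_lt_top.ne
  refine Filter.Eventually.of_forall fun θ => ?_
  unfold Sfun
  rw [Real.norm_eq_abs, abs_mul]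
  have h1 : ∀ t : ℝ, |Real.sign t| ≤ 1 := by
    intro t
    rcases lt_trichotomy t 0 with h | h | h
    · rw [Real.sign_of_neg h]; norm_num
    · simp [h, Real.sign_zero]
    · rw [Real.sign_of_pos h]; norm_num
  calc |Real.sign (Real.cos θ)| * |Real.sign (Real.cos (θ - α))| ≤ 1 * 1 :=
        mul_le_mul (h1 _) (h1 _) (abs_nonneg _) zero_le_one
    _ = 1 := mul_one 1

lemma const_piece {f : ℝ → ℝ} {a b c : ℝ} (hab : a ≤ b) (hf : ∀ θ ∈ Set.Ioo a b, f θ = c) :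
    ∫ θ in a..b, f θ = (b - a) * c := by
  rw [intervalIntegral.integral_of_le hab, integral_Ioc_eq_integral_Ioo,
    setIntegral_congr_fun measurableSet_Ioo hf, setIntegral_const, Real.volume_real_Ioo_of_le hab,
    smul_eq_mul]

lemma angular_integral (α : ℝ) (h0 : 0 < α) (hπ : α < π) :
    ∫ θ in Set.Ioo (-π) π, Sfun α θ = 2 * π - 4 * α := by
  have pi_pos := Real.pi_pos
  have key : ∫ θ in Set.Ioo (-π) π, Sfun α θ = ∫ θ in (-π)..π, Sfun α θ := by
    rw [intervalIntegral.integral_of_le (by linarith), integral_Ioc_eq_integral_Ioo]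
  rw [key]
  have hshift : ∫ θ in (α - π / 2)..(α - π / 2 + 2 * π), Sfun α θ
      = ∫ θ in (-π)..(-π + 2 * π), Sfun α θ :=
    (Sfun_periodic α).intervalIntegral_add_eq (α - π / 2) (-π)
  rw [show -π + 2 * π = π by ring] at hshift
  rw [← hshift]
  have hsplit1 := intervalIntegral.integral_add_adjacent_intervals
    (Sfun_intervalIntegrable α (α - π / 2) (π / 2))
    (Sfun_intervalIntegrable α (π / 2) (α - π / 2 + 2 * π))
  have hsplit2 := intervalIntegral.integral_add_adjacent_intervals
    (Sfun_intervalIntegrable α (π / 2) (α + π / 2))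
    (Sfun_intervalIntegrable α (α + π / 2) (α - π / 2 + 2 * π))
  have hsplit3 := intervalIntegral.integral_add_adjacent_intervals
    (Sfun_intervalIntegrable α (α + π / 2) (3 * π / 2))
    (Sfun_intervalIntegrable α (3 * π / 2) (α - π / 2 + 2 * π))
  have p1 : ∫ θ in (α - π / 2)..(π / 2), Sfun α θ = (π / 2 - (α - π / 2)) * 1 := by
    refine const_piece (by linarith) fun θ hθ => ?_
    obtain ⟨hθ1, hθ2⟩ := hθ
    have hc1 : 0 < Real.cos θ := Real.cos_pos_of_mem_Ioo ⟨by linarith, hθ2⟩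
    have hc2 : 0 < Real.cos (θ - α) :=
      Real.cos_pos_of_mem_Ioo ⟨by linarith, by linarith⟩
    rw [Sfun, Real.sign_of_pos hc1, Real.sign_of_pos hc2, mul_one]
  have p2 : ∫ θ in (π / 2)..(α + π / 2), Sfun α θ = (α + π / 2 - π / 2) * (-1) := by
    refine const_piece (by linarith) fun θ hθ => ?_
    obtain ⟨hθ1, hθ2⟩ := hθ
    have hc1 : Real.cos θ < 0 :=
      Real.cos_neg_of_pi_div_two_lt_of_lt hθ1 (by linarith)
    have hc2 : 0 < Real.cos (θ - α) :=
      Real.cos_pos_of_mem_Ioo ⟨by linarith, by linarith⟩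
    rw [Sfun, Real.sign_of_neg hc1, Real.sign_of_pos hc2, mul_one]
  have p3 : ∫ θ in (α + π / 2)..(3 * π / 2), Sfun α θ = (3 * π / 2 - (α + π / 2)) * 1 := by
    refine const_piece (by linarith) fun θ hθ => ?_
    obtain ⟨hθ1, hθ2⟩ := hθ
    have hc1 : Real.cos θ < 0 :=
      Real.cos_neg_of_pi_div_two_lt_of_lt (by linarith) (by linarith)
    have hc2 : Real.cos (θ - α) < 0 :=
      Real.cos_neg_of_pi_div_two_lt_of_lt (by linarith) (by linarith)
    rw [Sfun, Real.sign_of_neg hc1, Real.sign_of_neg hc2]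
    norm_num
  have p4 : ∫ θ in (3 * π / 2)..(α - π / 2 + 2 * π), Sfun α θ
      = (α - π / 2 + 2 * π - 3 * π / 2) * (-1) := by
    refine const_piece (by linarith) fun θ hθ => ?_
    obtain ⟨hθ1, hθ2⟩ := hθ
    have hc1 : 0 < Real.cos θ := by
      have : Real.cos (θ - 2 * π) = Real.cos θ := Real.cos_sub_two_pi θ
      rw [← this]
      exact Real.cos_pos_of_mem_Ioo ⟨by linarith, by linarith⟩
    have hc2 : Real.cos (θ - α) < 0 :=
      Real.cos_neg_of_pi_div_two_lt_of_lt (by linarith) (by linarith)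
    rw [Sfun, Real.sign_of_pos hc1, Real.sign_of_neg hc2, one_mul]
  rw [← hsplit1, ← hsplit2, ← hsplit3, p1, p2, p3, p4]
  ring

lemma Jval (α : ℝ) (h0 : 0 < α) (hπ : α < π) :
    ∫ q : ℝ × ℝ, Real.exp (-(q.1 ^ 2 + q.2 ^ 2)) *
        (Real.sign q.1 * Real.sign (Real.cos α * q.1 + Real.sin α * q.2))
      = π - 2 * α := by
  rw [← integral_comp_polarCoord_symm (fun q : ℝ × ℝ => Real.exp (-(q.1 ^ 2 + q.2 ^ 2)) *
    (Real.sign q.1 * Real.sign (Real.cos α * q.1 + Real.sin α * q.2))), polarCoord_target]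
  have hpt : Set.EqOn
      (fun q : ℝ × ℝ => q.1 • ((fun q : ℝ × ℝ => Real.exp (-(q.1 ^ 2 + q.2 ^ 2)) *
        (Real.sign q.1 * Real.sign (Real.cos α * q.1 + Real.sin α * q.2))) (polarCoord.symm q)))
      (fun q : ℝ × ℝ => (q.1 * Real.exp (-q.1 ^ 2)) * Sfun α q.2)
      (Set.Ioi (0 : ℝ) ×ˢ Set.Ioo (-π) π) := by
    rintro ⟨r, θ⟩ ⟨hr, hθ⟩
    simp only [polarCoord_symm_apply]
    have hr' : (0 : ℝ) < r := hr
    have hrsq : (r * Real.cos θ) ^ 2 + (r * Real.sin θ) ^ 2 = r ^ 2 := by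
      rw [mul_pow, mul_pow, ← mul_add, Real.cos_sq_add_sin_sq, mul_one]
    have hsgn1 : Real.sign (r * Real.cos θ) = Real.sign (Real.cos θ) := sign_mul_pos hr' _
    have hsgn2 : Real.sign (Real.cos α * (r * Real.cos θ) + Real.sin α * (r * Real.sin θ))
        = Real.sign (Real.cos (θ - α)) := by
      rw [show Real.cos α * (r * Real.cos θ) + Real.sin α * (r * Real.sin θ)
          = r * (Real.cos θ * Real.cos α + Real.sin θ * Real.sin α) by ring,
        sign_mul_pos hr', ← Real.cos_sub]
    simp only [hrsq, hsgn1, hsgn2, smul_eq_mul, Sfun]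
    ring
  rw [setIntegral_congr_fun (measurableSet_Ioi.prod measurableSet_Ioo) hpt,
    MeasureTheory.Measure.volume_eq_prod,
    setIntegral_prod_mul (fun r : ℝ => r * Real.exp (-r ^ 2)) (fun θ : ℝ => Sfun α θ),
    radial_integral, angular_integral α h0 hπ]
  ring

lemma sign_sq {t : ℝ} (h : t ≠ 0) : Real.sign t * Real.sign t = 1 := by
  rcases lt_trichotomy t 0 with h' | h' | h'
  · rw [Real.sign_of_neg h']; norm_num
  · exact absurd h' h
  · rw [Real.sign_of_pos h']; norm_num

lemma gauss_total_pos (d : ℕ) : 0 < ∫ x : 𝔼 d, Real.exp (-‖x‖ ^ 2) := by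
  have h := GaussianFourier.integral_rexp_neg_mul_sq_norm (V := 𝔼 d) (b := 1) one_pos
  simp only [neg_mul, one_mul, div_one, finrank_euclideanSpace_fin] at h
  rw [h]
  positivity

lemma Cpos (n : ℕ) :
    0 < ∫ u : {i : Fin (n + 2) // ¬ (i : ℕ) < 2} → ℝ, Real.exp (-∑ i, u i ^ 2) := by
  have hfun : (fun u : {i : Fin (n + 2) // ¬ (i : ℕ) < 2} → ℝ => Real.exp (-∑ i, u i ^ 2))
      = fun u => ∏ i, Real.exp (-u i ^ 2) := by
    funext u
    rw [← Real.exp_sum]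
    congr 1
    rw [← Finset.sum_neg_distrib]
  rw [hfun, integral_fintype_prod_volume_eq_prod
    (f := fun (_ : {i : Fin (n + 2) // ¬ (i : ℕ) < 2}) (t : ℝ) => Real.exp (-t ^ 2))]
  have : ∀ _i : {i : Fin (n + 2) // ¬ (i : ℕ) < 2}, (0:ℝ) < ∫ t : ℝ, Real.exp (-t ^ 2) := by
    intro _
    rw [gauss_1d]
    exact Real.sqrt_pos.mpr Real.pi_pos
  exact Finset.prod_pos fun i _ => this i

lemma main_case (n : ℕ) (x y e : 𝔼 (n + 2)) (hx : ‖x‖ = 1) (he : ‖e‖ = 1)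
    (hxe : ⟪x, e⟫ = 0) (α : ℝ) (h0 : 0 < α) (hπ : α < π)
    (hy : y = Real.cos α • x + Real.sin α • e) :
    ∫ v : sphere (0 : 𝔼 (n + 2)) 1,
        Real.sign ⟪x, (v : 𝔼 (n + 2))⟫ * Real.sign ⟪y, (v : 𝔼 (n + 2))⟫
          ∂(uniformSphere (n + 2))
      = 1 - 2 * α / π := by
  classical
  have pi_pos := Real.pi_pos
  set v0 : Fin (n + 2) → 𝔼 (n + 2) := fun i => if i = 0 then x else e with hv0
  have hinner_xx : ⟪x, x⟫ = 1 := by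
    rw [real_inner_self_eq_norm_sq, hx]; norm_num
  have hinner_ee : ⟪e, e⟫ = 1 := by
    rw [real_inner_self_eq_norm_sq, he]; norm_num
  have hinner_ex : ⟪e, x⟫ = 0 := by rw [real_inner_comm]; exact hxe
  have hortho : Orthonormal ℝ (Set.restrict {0, 1} v0) := by
    rw [orthonormal_iff_ite]
    rintro ⟨i, hi⟩ ⟨j, hj⟩
    simp only [Set.mem_insert_iff, Set.mem_singleton_iff] at hi hj
    have h10 : (1 : Fin (n + 2)) ≠ 0 := Ne.symm Fin.zero_ne_one
    rcases hi with rfl | rfl <;> rcases hj with rfl | rfl <;>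
      simp [Set.restrict, hv0, hinner_xx, hinner_ee, hxe, hinner_ex, Subtype.ext_iff,
        Fin.zero_ne_one, h10, hx, he]
  obtain ⟨b, hb⟩ := hortho.exists_orthonormalBasis_extension_of_card_eq
    (by rw [finrank_euclideanSpace_fin, Fintype.card_fin])
  have hb0 : b 0 = x := by
    have := hb 0 (by simp)
    simpa [hv0] using this
  have hb1 : b 1 = e := by
    have := hb 1 (by simp)
    have h10 : (1 : Fin (n + 2)) ≠ 0 := Ne.symm Fin.zero_ne_one
    simpa [hv0, h10] using this
  have hscale : ∀ (r : ℝ), 0 < r → ∀ v : 𝔼 (n + 2),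
      (Real.sign ⟪x, r • v⟫ * Real.sign ⟪y, r • v⟫)
        = Real.sign ⟪x, v⟫ * Real.sign ⟪y, v⟫ := by
    intro r hr v
    rw [real_inner_smul_right, real_inner_smul_right, sign_mul_pos hr, sign_mul_pos hr]
  rw [sphere_avg (n + 2) (by omega)
    (fun v : 𝔼 (n + 2) => Real.sign ⟪x, v⟫ * Real.sign ⟪y, v⟫) hscale]
  have hinner_y : ∀ v : 𝔼 (n + 2), ⟪y, v⟫ = Real.cos α * ⟪x, v⟫ + Real.sin α * ⟪e, v⟫ := by
    intro v
    rw [hy, inner_add_left, real_inner_smul_left, real_inner_smul_left]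
  have hnum : (fun v : 𝔼 (n + 2) =>
        Real.exp (-‖v‖ ^ 2) * (Real.sign ⟪x, v⟫ * Real.sign ⟪y, v⟫))
      = fun v : 𝔼 (n + 2) => Real.exp (-‖v‖ ^ 2) *
          (fun a c : ℝ => Real.sign a * Real.sign (Real.cos α * a + Real.sin α * c))
            ⟪b 0, v⟫ ⟪b 1, v⟫ := by
    funext v
    simp only [hb0, hb1]
    rw [hinner_y]
  have hden : (fun v : 𝔼 (n + 2) => Real.exp (-‖v‖ ^ 2))
      = fun v : 𝔼 (n + 2) => Real.exp (-‖v‖ ^ 2) *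
          (fun _ _ : ℝ => (1 : ℝ)) ⟪b 0, v⟫ ⟪b 1, v⟫ := by
    funext v
    simp
  rw [hnum, hden, chain n b (fun a c : ℝ => Real.sign a *
      Real.sign (Real.cos α * a + Real.sin α * c)),
    chain n b (fun _ _ : ℝ => (1 : ℝ))]
  have hJ : ∫ p : ℝ × ℝ, Real.exp (-(p.1 ^ 2 + p.2 ^ 2)) *
      (fun a c : ℝ => Real.sign a * Real.sign (Real.cos α * a + Real.sin α * c)) p.1 p.2
      = π - 2 * α := Jval α h0 hπ
  have hK : ∫ p : ℝ × ℝ, Real.exp (-(p.1 ^ 2 + p.2 ^ 2)) *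
      (fun _ _ : ℝ => (1 : ℝ)) p.1 p.2 = π := by
    simpa using Kval
  rw [hJ, hK]
  have hC := Cpos n
  field_simp

theorem expected_sign_product (d : ℕ) (hd : 1 ≤ d)
    (x y : EuclideanSpace ℝ (Fin d)) (hx : ‖x‖ = 1) (hy : ‖y‖ = 1) :
    ∫ v : sphere (0 : EuclideanSpace ℝ (Fin d)) 1,
        Real.sign ⟪x, (v : EuclideanSpace ℝ (Fin d))⟫ *
          Real.sign ⟪y, (v : EuclideanSpace ℝ (Fin d))⟫ ∂(uniformSphere d) =
      1 - 2 * Real.arccos ⟪x, y⟫ / Real.pi := by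
  classical
  have pi_pos := Real.pi_pos
  have hxne : x ≠ 0 := by
    intro h
    rw [h] at hx
    simp at hx
  have hnull : (volume : Measure (𝔼 d)) {v : 𝔼 d | ⟪x, v⟫ = 0} = 0 := by
    have hset : {v : 𝔼 d | ⟪x, v⟫ = 0}
        = ((Submodule.span ℝ {x})ᗮ : Submodule ℝ (𝔼 d)) := by
      ext v
      simp [Submodule.mem_orthogonal_singleton_iff_inner_right]
    rw [hset]
    refine Measure.addHaar_submodule _ _ ?_
    intro htop
    have hmem : x ∈ (Submodule.span ℝ {x})ᗮ := htop ▸ Submodule.mem_top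
    rw [Submodule.mem_orthogonal_singleton_iff_inner_right, real_inner_self_eq_norm_sq, hx]
      at hmem
    norm_num at hmem
  have hae : ∀ᵐ v ∂(volume : Measure (𝔼 d)), ⟪x, v⟫ ≠ 0 := by
    rw [ae_iff]
    simpa using hnull
  have habs : |⟪x, y⟫| ≤ 1 := by
    have h := abs_real_inner_le_norm x y
    rw [hx, hy] at h
    simpa using h
  by_cases h1 : ⟪x, y⟫ = 1
  · have hxy : x = y := (inner_eq_one_iff_of_norm_eq_one hx hy).mp h1
    subst hxy
    have hscale : ∀ (r : ℝ), 0 < r → ∀ v : 𝔼 d,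
        (Real.sign ⟪x, r • v⟫ * Real.sign ⟪x, r • v⟫)
          = Real.sign ⟪x, v⟫ * Real.sign ⟪x, v⟫ := by
      intro r hr v
      rw [real_inner_smul_right, sign_mul_pos hr]
    rw [sphere_avg d hd (fun v : 𝔼 d => Real.sign ⟪x, v⟫ * Real.sign ⟪x, v⟫) hscale]
    have hcong : (fun v : 𝔼 d => Real.exp (-‖v‖ ^ 2) * (Real.sign ⟪x, v⟫ * Real.sign ⟪x, v⟫))
        =ᵐ[volume] fun v : 𝔼 d => Real.exp (-‖v‖ ^ 2) := by
      filter_upwards [hae] with v hv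
      rw [sign_sq hv, mul_one]
    rw [integral_congr_ae hcong, h1, Real.arccos_one, div_self (gauss_total_pos d).ne']
    norm_num
  · by_cases h2 : ⟪x, y⟫ = -1
    · have hyx : x = -y := by
        have hinner : ⟪x, -y⟫ = 1 := by
          rw [inner_neg_right, h2]; norm_num
        exact (inner_eq_one_iff_of_norm_eq_one hx (by rw [norm_neg]; exact hy)).mp hinner
      have hxy : y = -x := by rw [hyx, neg_neg]
      subst hxy
      have hscale : ∀ (r : ℝ), 0 < r → ∀ v : 𝔼 d,
          (Real.sign ⟪x, r • v⟫ * Real.sign ⟪-x, r • v⟫)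
            = Real.sign ⟪x, v⟫ * Real.sign ⟪-x, v⟫ := by
        intro r hr v
        rw [real_inner_smul_right, real_inner_smul_right, sign_mul_pos hr, sign_mul_pos hr]
      rw [sphere_avg d hd (fun v : 𝔼 d => Real.sign ⟪x, v⟫ * Real.sign ⟪-x, v⟫) hscale]
      have hcong : (fun v : 𝔼 d =>
            Real.exp (-‖v‖ ^ 2) * (Real.sign ⟪x, v⟫ * Real.sign ⟪-x, v⟫))
          =ᵐ[volume] fun v : 𝔼 d => -Real.exp (-‖v‖ ^ 2) := by
        filter_upwards [hae] with v hv
        rw [inner_neg_left, Real.sign_neg, mul_neg, sign_sq hv, mul_neg, mul_one]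
      rw [integral_congr_ae hcong, h2, Real.arccos_neg_one, integral_neg,
        neg_div, div_self (gauss_total_pos d).ne', mul_div_assoc, div_self pi_pos.ne']
      norm_num
    · have habs' : |⟪x, y⟫| < 1 := by
        rcases lt_or_eq_of_le habs with h | h
        · exact h
        · exfalso
          rcases abs_eq (by norm_num : (0:ℝ) ≤ 1) |>.mp h with h' | h'
          · exact h1 h'
          · exact h2 h'
      set ρ := ⟪x, y⟫ with hρ
      have hρlt : ρ < 1 := lt_of_abs_lt habs'
      have hρgt : -1 < ρ := neg_lt_of_abs_lt habs'
      set α := Real.arccos ρ with hα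
      have hcos : Real.cos α = ρ := Real.cos_arccos hρgt.le hρlt.le
      have h0α : 0 < α := Real.arccos_pos.mpr hρlt
      have hπα : α < π := by
        refine lt_of_le_of_ne (Real.arccos_le_pi ρ) ?_
        rw [Ne, Real.arccos_eq_pi]
        intro h
        linarith
      set s := Real.sin α with hs_def
      have hs : 0 < s := Real.sin_pos_of_pos_of_lt_pi h0α hπα
      have hnorm_sub : ‖y - ρ • x‖ = s := by
        have hsq : ‖y - ρ • x‖ ^ 2 = s ^ 2 := by
          rw [norm_sub_sq_real, real_inner_smul_right, norm_smul, Real.norm_eq_abs]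
          have hyx2 : (⟪y, x⟫ : ℝ) = ρ := by rw [hρ]; exact real_inner_comm _ _
          rw [hx, hy, hyx2]
          have hsin : s ^ 2 = 1 - ρ ^ 2 := by
            rw [hs_def, Real.sin_sq, hcos]
          rw [hsin]
          have : |ρ| ^ 2 = ρ ^ 2 := sq_abs ρ
          nlinarith [this]
        have := congrArg Real.sqrt hsq
        rwa [Real.sqrt_sq (norm_nonneg _), Real.sqrt_sq hs.le] at this
      set e : 𝔼 d := s⁻¹ • (y - ρ • x) with he_def
      have he : ‖e‖ = 1 := by
        rw [he_def, norm_smul, hnorm_sub, norm_inv, Real.norm_eq_abs, abs_of_pos hs,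
          inv_mul_cancel₀ hs.ne']
      have hxe : ⟪x, e⟫ = 0 := by
        rw [he_def, real_inner_smul_right, inner_sub_right, real_inner_smul_right,
          real_inner_self_eq_norm_sq, hx, ← hρ]
        norm_num
      have hy2 : y = Real.cos α • x + Real.sin α • e := by
        rw [hcos, ← hs_def, he_def, smul_smul, mul_inv_cancel₀ hs.ne', one_smul]
        abel
      have hinner_ex : ⟪e, x⟫ = 0 := by rw [real_inner_comm]; exact hxe
      have hd2 : 2 ≤ d := by
        have hON : Orthonormal ℝ ![x, e] := by
          rw [orthonormal_iff_ite]
          intro i j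
          have hxx : (⟪x, x⟫ : ℝ) = 1 := by rw [real_inner_self_eq_norm_sq, hx]; norm_num
          have hee : (⟪e, e⟫ : ℝ) = 1 := by rw [real_inner_self_eq_norm_sq, he]; norm_num
          fin_cases i <;> fin_cases j
          · rw [if_pos rfl]; exact hxx
          · rw [if_neg (by decide)]; exact hxe
          · rw [if_neg (by decide)]; exact hinner_ex
          · rw [if_pos rfl]; exact hee
        have hcard := hON.linearIndependent.fintype_card_le_finrank
        rw [finrank_euclideanSpace_fin] at hcard
        simpa using hcard
      obtain ⟨n, rfl⟩ : ∃ n, d = n + 2 := ⟨d - 2, by omega⟩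
      exact main_case n x y e hx he hxe α h0α hπα hy2
end
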